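/- arXiv:1804.03387 — 12 statements merged into one kernel-verified Lean document; each statement's English description precedes it below -/
import Mathlib

section
/- Let F, F₁, F₂, … : ℝⁿ → ℝ be convex functions, and let G, G₁, G₂, … : ℝⁿ → ℝ ∪ {+∞} denote their respective Legendre transforms. Then the sequence (F_j) decreases pointwise to F on ℝⁿ (i.e. F_j ≥ F_{j+1} for all j and F_j(x) → F(x) for every x) if and only if the sequence (G_j) increases pointwise to G on ℝⁿ (i.e. G_j ≤ G_{j+1} for all j and G_j(s) → G(s) in ℝ ∪ {+∞} for every s). -/
/-!
If `F_j` decreases to `F`, exchanging two suprema gives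
`sup_j sup_x (⟪x, s⟫ - F_j x) = sup_x (⟪x, s⟫ - F x)`, i.e. `G_j` increases to `G`.
Conversely, a finite convex function on `ℝⁿ` is continuous, hence has a subgradient at every
point, which yields the Fenchel–Moreau identity `F x = sup_s (⟪x, s⟫ - G s)`. It turns
`G_j ≤ G_{j+1} ≤ G` into `F ≤ F_{j+1} ≤ F_j`; the limit `L = inf_j F_j` is convex and, by the
first direction, has Legendre transform `G`, so Fenchel–Moreau once more gives `L = F`.
-/

open Filter Topology RealInnerProductSpace Set

theorem convexOn_of_tendsto {E ι : Type*} [AddCommMonoid E] [Module ℝ E] {l : Filter ι} [l.NeBot]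
    {s : Set E} {f : ι → E → ℝ} {g : E → ℝ} (hf : ∀ i, ConvexOn ℝ s (f i))
    (hlim : ∀ x ∈ s, Tendsto (f · x) l (𝓝 (g x))) : ConvexOn ℝ s g := by
  obtain ⟨i⟩ : Nonempty ι := l.nonempty_of_neBot
  refine ⟨(hf i).1, fun x hx y hy a b ha hb hab => ?_⟩
  exact le_of_tendsto_of_tendsto (hlim _ ((hf i).1 hx hy ha hb hab))
    (((hlim x hx).const_mul a).add ((hlim y hy).const_mul b))
    (Eventually.of_forall fun j => (hf j).2 hx hy ha hb hab)

section Subgradient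

variable {E : Type*} [NormedAddCommGroup E] {F : E → ℝ}

theorem ConvexOn.exists_dual_subgradient [NormedSpace ℝ E] (hF : ConvexOn ℝ univ F)
    (hc : Continuous F) (x : E) : ∃ φ : StrongDual ℝ E, ∀ y, F x + φ (y - x) ≤ F y := by
  -- separate `(x, F x)` from the open convex strict epigraph by a functional `f`
  obtain ⟨f, hf⟩ := geometric_hahn_banach_open_point (x := (x, F x)) hF.convex_strict_epigraph
    (by simpa using isOpen_lt (hc.comp continuous_fst) continuous_snd) (by simp)
  have hf' : ∀ y t, F y < t → f (y, t) < f (x, F x) := fun y t h => hf (y, t) ⟨trivial, h⟩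
  set c := f (0, 1)
  have hsplit : ∀ y t, f (y, t) = f (y, 0) + t * c := fun y t => by
    rw [← smul_eq_mul, ← f.map_smul, ← map_add]
    simp
  have hc_neg : c < 0 := by
    have := hf' x (F x + 1) (by linarith)
    rw [hsplit, hsplit x (F x)] at this
    linarith
  have key : ∀ y, f (y, 0) + F y * c ≤ f (x, 0) + F x * c := fun y => by
    refine le_of_forall_pos_lt_add fun ε hε => ?_
    have := hf' y (F y - ε / c) (by linarith [div_neg_of_pos_of_neg hε hc_neg])
    rw [hsplit, hsplit x (F x), sub_mul, div_mul_cancel₀ ε hc_neg.ne] at this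
    linarith
  refine ⟨(-c)⁻¹ • f.comp (ContinuousLinearMap.inl ℝ E ℝ), fun y => ?_⟩
  have hfy : f (y - x, 0) = f (y, 0) - f (x, 0) := by
    rw [← map_sub, Prod.mk_sub_mk, sub_zero]
  have : (-c)⁻¹ * f (y - x, 0) ≤ F y - F x :=
    (inv_mul_le_iff₀ (neg_pos.2 hc_neg)).2 (by linarith [key y])
  simpa using this

theorem ConvexOn.exists_subgradient [InnerProductSpace ℝ E] [CompleteSpace E]
    (hF : ConvexOn ℝ univ F) (hc : Continuous F) (x : E) :
    ∃ s : E, ∀ y, F x + ⟪y - x, s⟫ ≤ F y := by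
  obtain ⟨φ, hφ⟩ := hF.exists_dual_subgradient hc x
  refine ⟨(InnerProductSpace.toDual ℝ E).symm φ, fun y => ?_⟩
  rw [real_inner_comm, InnerProductSpace.toDual_symm_apply]
  exact hφ y

end Subgradient

section Legendre

variable {E : Type*} [NormedAddCommGroup E] [InnerProductSpace ℝ E] {F F' : E → ℝ}

noncomputable def legendre (F : E → ℝ) (s : E) : EReal :=
  ⨆ x, ((⟪x, s⟫ - F x : ℝ) : EReal)

theorem inner_sub_le_legendre (F : E → ℝ) (x s : E) :
    ((⟪x, s⟫ - F x : ℝ) : EReal) ≤ legendre F s :=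
  le_iSup (fun x => ((⟪x, s⟫ - F x : ℝ) : EReal)) x

theorem legendre_anti (h : F ≤ F') : legendre F' ≤ legendre F := fun s =>
  iSup_mono fun x => EReal.coe_le_coe_iff.2 (by linarith [h x])

theorem legendre_eq_of_subgradient {x s : E} (hs : ∀ y, F x + ⟪y - x, s⟫ ≤ F y) :
    legendre F s = ((⟪x, s⟫ - F x : ℝ) : EReal) := by
  refine le_antisymm (iSup_le fun y => EReal.coe_le_coe_iff.2 ?_) (inner_sub_le_legendre F x s)
  have := hs y
  rw [inner_sub_left] at this
  linarith

theorem iSup_inner_sub_legendre_le (F : E → ℝ) (x : E) :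
    ⨆ s, ((⟪x, s⟫ : ℝ) : EReal) - legendre F s ≤ F x := by
  refine iSup_le fun s => ?_
  calc ((⟪x, s⟫ : ℝ) : EReal) - legendre F s
      ≤ ((⟪x, s⟫ : ℝ) : EReal) - ((⟪x, s⟫ - F x : ℝ) : EReal) :=
        EReal.sub_le_sub le_rfl (inner_sub_le_legendre F x s)
    _ = F x := by rw [← EReal.coe_sub, sub_sub_cancel]

theorem ConvexOn.iSup_inner_sub_legendre [CompleteSpace E] (hF : ConvexOn ℝ univ F)
    (hc : Continuous F) (x : E) : ⨆ s, ((⟪x, s⟫ : ℝ) : EReal) - legendre F s = F x := by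
  refine le_antisymm (iSup_inner_sub_legendre_le F x) ?_
  obtain ⟨s, hs⟩ := hF.exists_subgradient hc x
  calc (F x : EReal) = ((⟪x, s⟫ : ℝ) : EReal) - legendre F s := by
        rw [legendre_eq_of_subgradient hs, ← EReal.coe_sub, sub_sub_cancel]
    _ ≤ ⨆ s, ((⟪x, s⟫ : ℝ) : EReal) - legendre F s :=
        le_iSup (fun s => ((⟪x, s⟫ : ℝ) : EReal) - legendre F s) s

theorem ConvexOn.le_of_legendre_le [CompleteSpace E] (hF' : ConvexOn ℝ univ F')
    (hc : Continuous F') (h : legendre F ≤ legendre F') : F' ≤ F := fun x => by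
  have : (F' x : EReal) ≤ F x :=
    calc (F' x : EReal) = ⨆ s, ((⟪x, s⟫ : ℝ) : EReal) - legendre F' s :=
          (hF'.iSup_inner_sub_legendre hc x).symm
      _ ≤ ⨆ s, ((⟪x, s⟫ : ℝ) : EReal) - legendre F s :=
          iSup_mono fun s => EReal.sub_le_sub le_rfl (h s)
      _ ≤ F x := iSup_inner_sub_legendre_le F x
  exact_mod_cast this

theorem iSup_legendre_of_antitone_of_tendsto {Fj : ℕ → E → ℝ} (hanti : ∀ x, Antitone (Fj · x))
    (hlim : ∀ x, Tendsto (Fj · x) atTop (𝓝 (F x))) (s : E) :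
    ⨆ j, legendre (Fj j) s = legendre F s := by
  simp only [legendre]
  rw [iSup_comm]
  refine iSup_congr fun x => tendsto_nhds_unique (tendsto_atTop_iSup fun i j hij => ?_) ?_
  · exact EReal.coe_le_coe_iff.2 (by linarith [hanti x hij])
  · exact continuous_coe_real_ereal.tendsto _ |>.comp (tendsto_const_nhds.sub (hlim x))

end Legendre

/-- For convex functions `F, F₁, F₂, … : ℝⁿ → ℝ` with Legendre transforms
`G, G₁, G₂, … : ℝⁿ → ℝ ∪ {+∞}`, the sequence `(Fⱼ)` decreases pointwise to `F`
if and only if the sequence `(Gⱼ)` increases pointwise to `G`. -/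
theorem legendre_decreasing_iff_increasing
    (n : ℕ) (F : EuclideanSpace ℝ (Fin n) → ℝ)
    (Fj : ℕ → EuclideanSpace ℝ (Fin n) → ℝ)
    (hF : ConvexOn ℝ Set.univ F) (hFj : ∀ j, ConvexOn ℝ Set.univ (Fj j))
    (G : EuclideanSpace ℝ (Fin n) → EReal)
    (Gj : ℕ → EuclideanSpace ℝ (Fin n) → EReal)
    (hG : ∀ s, G s = ⨆ x, ((⟪x, s⟫ - F x : ℝ) : EReal))
    (hGj : ∀ j s, Gj j s = ⨆ x, ((⟪x, s⟫ - Fj j x : ℝ) : EReal)) :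
    ((∀ j x, Fj (j + 1) x ≤ Fj j x) ∧
        ∀ x, Tendsto (fun j => Fj j x) atTop (nhds (F x)))
      ↔ ((∀ j s, Gj j s ≤ Gj (j + 1) s) ∧
        ∀ s, Tendsto (fun j => Gj j s) atTop (nhds (G s))) := by
  obtain rfl : G = legendre F := funext hG
  obtain rfl : Gj = fun j => legendre (Fj j) := funext₂ hGj
  have cont : ∀ {f : EuclideanSpace ℝ (Fin n) → ℝ}, ConvexOn ℝ univ f → Continuous f :=
    fun hf => continuousOn_univ.mp (hf.continuousOn isOpen_univ)
  constructor
  · rintro ⟨hstep, hlim⟩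
    have hanti : ∀ x, Antitone (Fj · x) := fun x => antitone_nat_of_succ_le (hstep · x)
    refine ⟨fun j => legendre_anti (hstep j), fun s => ?_⟩
    rw [← iSup_legendre_of_antitone_of_tendsto hanti hlim]
    exact tendsto_atTop_iSup fun i j hij => legendre_anti (fun x => hanti x hij) s
  · rintro ⟨hstep, hlim⟩
    have hGsup : ∀ s, ⨆ j, legendre (Fj j) s = legendre F s := fun s =>
      tendsto_nhds_unique (tendsto_atTop_iSup (monotone_nat_of_le_succ (hstep · s))) (hlim s)
    have hFstep : ∀ j, Fj (j + 1) ≤ Fj j := fun j =>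
      (hFj (j + 1)).le_of_legendre_le (cont (hFj _)) (hstep j)
    have hFle : ∀ j, F ≤ Fj j := fun j =>
      hF.le_of_legendre_le (cont hF) fun s => hGsup s ▸ le_iSup (fun j => legendre (Fj j) s) j
    have hanti : ∀ x, Antitone (Fj · x) := fun x => antitone_nat_of_succ_le (hFstep · x)
    set L := fun x => ⨅ j, Fj j x
    have hL : ∀ x, Tendsto (Fj · x) atTop (𝓝 (L x)) := fun x =>
      tendsto_atTop_ciInf (hanti x) ⟨F x, by rintro _ ⟨j, rfl⟩; exact hFle j x⟩
    have hLconv : ConvexOn ℝ univ L := convexOn_of_tendsto hFj fun x _ => hL x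
    have hLF : L ≤ F := hLconv.le_of_legendre_le (cont hLconv) fun s => by
      rw [← hGsup, iSup_legendre_of_antitone_of_tendsto hanti hL]
    refine ⟨hFstep, fun x => ?_⟩
    rw [← le_antisymm (hLF x) (le_ciInf fun j => hFle j x)]
    exact hL x
end

section
/- Let F₁, F₂ : ℝⁿ → ℝ be twice continuously differentiable convex functions such that F₂(x) → +∞ as ‖x‖ → +∞ and F₁(x) ≤ F₂(x) for all x ∈ ℝⁿ. Then ∫_{ℝⁿ} det(D²F₁(x)) dx ≤ ∫_{ℝⁿ} det(D²F₂(x)) dx, where both integrals of the nonnegative integrands are taken with respect to Lebesgue measure and take values in [0, +∞]. -/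
open MeasureTheory Filter Topology RealInnerProductSpace

open Set InnerProductSpace
open scoped Gradient Matrix

/-!
The gradient of a convex `C²` function is injective where its Hessian is positive definite, so
by the area formula `∫ det D²F₁` is the volume of `∇F₁ {det D²F₁ > 0}`. Every slope `p = ∇F₁ x₀`
of this set is also a slope of `F₂`: `F₁ - p` has a strict global minimum at `x₀`, so by
convexity it grows linearly at infinity; hence so does `F₂ - p ≥ F₁ - p`, which therefore attains
its minimum at some `y`, where `∇F₂ y = p`. The set thus lies in the range of `∇F₂`, whose volume
is at most `∫ det D²F₂` by the area formula again.
-/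

theorem ContDiff.differentiable_fderiv_two {E F : Type*} [NormedAddCommGroup E]
    [NormedSpace ℝ E] [NormedAddCommGroup F] [NormedSpace ℝ F] {f : E → F}
    (hf : ContDiff ℝ 2 f) :
    Differentiable ℝ (fderiv ℝ f) :=
  (hf.fderiv_right (m := 1) le_rfl).differentiable one_ne_zero

section Convex

variable {E : Type*} [NormedAddCommGroup E] [NormedSpace ℝ E] {f : E → ℝ}

theorem hasDerivAt_comp_add_smul {F : Type*} [NormedAddCommGroup F] [NormedSpace ℝ F]
    {g : E → F} {g' : E →L[ℝ] F} {x v : E} {t : ℝ} (hg : HasFDerivAt g g' (x + t • v)) :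
    HasDerivAt (fun s : ℝ => g (x + s • v)) (g' v) t := by
  have hline : HasDerivAt (fun s : ℝ => x + s • v) v t := by
    simpa using ((hasDerivAt_id t).smul_const v).const_add x
  exact hg.comp_hasDerivAt t hline

theorem hasDerivAt_fderiv_add_smul_apply {B : E →L[ℝ] E →L[ℝ] ℝ} {x : E}
    (hB : HasFDerivAt (fderiv ℝ f) B x) (v : E) :
    HasDerivAt (fun t : ℝ => fderiv ℝ f (x + t • v) v) (B v v) 0 := by
  have h := hasDerivAt_comp_add_smul (t := 0) (v := v) (by simpa using hB)
  simpa using h.clm_apply (hasDerivAt_const 0 v)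

theorem Monotone.lt_of_hasDerivAt_pos {φ : ℝ → ℝ} (hφ : Monotone φ) {d a b : ℝ}
    (hd : HasDerivAt φ d a) (hpos : 0 < d) (hab : a < b) : φ a < φ b := by
  have hslope : ∀ᶠ t in 𝓝[>] (0 : ℝ), 0 < t⁻¹ • (φ (a + t) - φ a) :=
    hd.tendsto_slope_zero_right.eventually (lt_mem_nhds hpos)
  obtain ⟨t, ht, htb⟩ := (hslope.and (Ioo_mem_nhdsGT (sub_pos.2 hab))).exists
  have : φ a < φ (a + t) := by
    simpa [smul_eq_mul, htb.1, mul_pos_iff] using ht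
  exact this.trans_le (hφ (by linarith [htb.2]))

theorem ConvexOn.comp_add_smul (hf : ConvexOn ℝ univ f) (x v : E) :
    ConvexOn ℝ univ fun t : ℝ => f (x + t • v) := by
  simpa [Function.comp_def, AffineMap.lineMap_apply, add_comm, add_left_comm]
    using hf.comp_affineMap (AffineMap.lineMap x (x + v))

theorem ConvexOn.monotone_fderiv_add_smul_apply (hf : ConvexOn ℝ univ f)
    (hd : Differentiable ℝ f) (x v : E) :
    Monotone fun t : ℝ => fderiv ℝ f (x + t • v) v := by
  have hφ (t : ℝ) := hasDerivAt_comp_add_smul (hd (x + t • v)).hasFDerivAt (x := x) (v := v)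
  intro a b hab
  simpa only [(hφ a).deriv, (hφ b).deriv] using (hf.comp_add_smul x v).monotoneOn_deriv
    (fun t _ => (hφ t).differentiableAt) (mem_univ a) (mem_univ b) hab

section SecondDerivative

variable {B : E →L[ℝ] E →L[ℝ] ℝ} {x : E}

theorem ConvexOn.apply_self_nonneg_of_hasFDerivAt_fderiv (hf : ConvexOn ℝ univ f)
    (hd : Differentiable ℝ f) (hB : HasFDerivAt (fderiv ℝ f) B x) (v : E) : 0 ≤ B v v := by
  simpa only [(hasDerivAt_fderiv_add_smul_apply hB v).deriv]
    using (hf.monotone_fderiv_add_smul_apply hd x v).deriv_nonneg (x := 0)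

theorem ConvexOn.fderiv_apply_lt_fderiv_add_smul_apply (hf : ConvexOn ℝ univ f)
    (hd : Differentiable ℝ f) (hB : HasFDerivAt (fderiv ℝ f) B x) {v : E} (hv : 0 < B v v)
    {t : ℝ} (ht : 0 < t) : fderiv ℝ f x v < fderiv ℝ f (x + t • v) v := by
  simpa using (hf.monotone_fderiv_add_smul_apply hd x v).lt_of_hasDerivAt_pos
    (hasDerivAt_fderiv_add_smul_apply hB v) hv ht

theorem ConvexOn.add_fderiv_apply_lt (hf : ConvexOn ℝ univ f) (hd : Differentiable ℝ f)
    (hB : HasFDerivAt (fderiv ℝ f) B x) {y : E} (hpos : 0 < B (y - x) (y - x)) :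
    f x + fderiv ℝ f x (y - x) < f y := by
  obtain ⟨c, hc, hslope⟩ := exists_hasDerivAt_eq_slope (fun t : ℝ => f (x + t • (y - x)))
    (fun t => fderiv ℝ f (x + t • (y - x)) (y - x)) zero_lt_one
    (fun t _ => (hasDerivAt_comp_add_smul (hd _).hasFDerivAt).continuousAt.continuousWithinAt)
    (fun t _ => hasDerivAt_comp_add_smul (hd _).hasFDerivAt)
  have hlt := hf.fderiv_apply_lt_fderiv_add_smul_apply hd hB hpos hc.1
  simp only [one_smul, zero_smul, add_zero, add_sub_cancel, sub_zero, div_one] at hslope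
  linarith

end SecondDerivative

theorem ConvexOn.injOn_fderiv (hf : ConvexOn ℝ univ f) (hd : Differentiable ℝ f)
    (hd2 : Differentiable ℝ (fderiv ℝ f)) :
    InjOn (fderiv ℝ f) {x | ∀ v ≠ 0, 0 < fderiv ℝ (fderiv ℝ f) x v v} := by
  intro x hx y _ hxy
  by_contra hne
  have hlt := hf.fderiv_apply_lt_fderiv_add_smul_apply hd (hd2 x).hasFDerivAt
    (hx (y - x) (sub_ne_zero.2 (Ne.symm hne))) zero_lt_one
  simp [hxy] at hlt

theorem ConvexOn.add_mul_le_of_forall_mem_sphere {x : E} {m r : ℝ} (hf : ConvexOn ℝ univ f)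
    (hr : 0 < r) (hm : 0 ≤ m) (hmin : ∀ y, f x ≤ f y)
    (hsphere : ∀ z ∈ Metric.sphere x r, f x + m ≤ f z) (y : E) :
    f x + m * (‖y - x‖ / r - 1) ≤ f y := by
  rcases le_or_gt ‖y - x‖ r with hyr | hyr
  · have : m * (‖y - x‖ / r - 1) ≤ 0 :=
      mul_nonpos_of_nonneg_of_nonpos hm (by rw [sub_nonpos, div_le_one hr]; exact hyr)
    linarith [hmin y]
  · set t := ‖y - x‖ / r
    have ht : 1 < t := (one_lt_div hr).2 hyr
    have hz : x + t⁻¹ • (y - x) ∈ Metric.sphere x r := by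
      simp [t, norm_smul, abs_of_pos hr, (hr.trans hyr).ne']
    have hseg : (1 - t⁻¹) • x + t⁻¹ • y = x + t⁻¹ • (y - x) := by
      rw [smul_sub, sub_smul, one_smul]; abel
    have hconv := hf.2 (mem_univ x) (mem_univ y) (sub_nonneg.2 (inv_le_one_of_one_le₀ ht.le))
      (inv_nonneg.2 (by linarith)) (sub_add_cancel 1 t⁻¹)
    rw [hseg, smul_eq_mul, smul_eq_mul] at hconv
    have hscale : t * ((1 - t⁻¹) * f x + t⁻¹ * f y) = (t - 1) * f x + f y := by
      field_simp
    have := mul_le_mul_of_nonneg_left ((hsphere _ hz).trans hconv) (by linarith : 0 ≤ t)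
    rw [hscale] at this
    nlinarith

theorem ConvexOn.tendsto_cocompact_atTop [ProperSpace E] {x : E} (hf : ConvexOn ℝ univ f)
    (hcont : Continuous f) (hmin : ∀ y ≠ x, f x < f y) :
    Tendsto f (cocompact E) atTop := by
  obtain ⟨m, hm, hsphere⟩ : ∃ m > 0, ∀ z ∈ Metric.sphere x 1, f x + m ≤ f z := by
    rcases (Metric.sphere x (1 : ℝ)).eq_empty_or_nonempty with hempty | hne
    · exact ⟨1, one_pos, by simp [hempty]⟩
    obtain ⟨z, hz, hzmin⟩ := (isCompact_sphere x 1).exists_isMinOn hne hcont.continuousOn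
    have hzx : z ≠ x := by rintro rfl; simp at hz
    exact ⟨f z - f x, sub_pos.2 (hmin z hzx),
      fun w hw => by linarith [isMinOn_iff.1 hzmin w hw]⟩
  have hbound := hf.add_mul_le_of_forall_mem_sphere one_pos hm.le
    (fun y => (eq_or_ne y x).elim (fun h => h ▸ le_rfl) fun h => (hmin y h).le) hsphere
  refine tendsto_atTop_mono hbound (tendsto_atTop_add_const_left _ _ ?_)
  refine (tendsto_atTop_add_const_right _ _ ?_).const_mul_atTop hm
  simpa [Function.comp_def] using
    tendsto_norm_cocompact_atTop.comp (Homeomorph.subRight x).isClosedEmbedding.tendsto_cocompact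

theorem ConvexOn.exists_fderiv_eq_of_le [ProperSpace E] {g : E → ℝ}
    {B : E →L[ℝ] E →L[ℝ] ℝ} {x : E} (hf : ConvexOn ℝ univ f) (hd : Differentiable ℝ f)
    (hB : HasFDerivAt (fderiv ℝ f) B x) (hpos : ∀ v ≠ 0, 0 < B v v)
    (hg : Differentiable ℝ g) (hle : ∀ y, f y ≤ g y) :
    ∃ y, fderiv ℝ g y = fderiv ℝ f x := by
  set ℓ := fderiv ℝ f x
  have hcoercive : Tendsto (f - ⇑ℓ) (cocompact E) atTop := by
    refine (hf.sub (ℓ.toLinearMap.concaveOn convex_univ)).tendsto_cocompact_atTop (x := x)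
      (hd.continuous.sub ℓ.continuous) fun y hy => ?_
    have := hf.add_fderiv_apply_lt hd hB (hpos _ (sub_ne_zero.2 hy))
    simp only [Pi.sub_apply, map_sub] at this ⊢
    linarith
  obtain ⟨y, hy⟩ := (hg.continuous.sub ℓ.continuous).exists_forall_le
    (tendsto_atTop_mono (fun y => by simp only [Pi.sub_apply]; linarith [hle y]) hcoercive)
  have hcrit := (show IsLocalMin (g - ⇑ℓ) y from Eventually.of_forall hy).fderiv_eq_zero
  rw [fderiv_sub (hg y) ℓ.differentiableAt, ContinuousLinearMap.fderiv] at hcrit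
  exact ⟨y, sub_eq_zero.1 hcrit⟩

end Convex

section Gradient

variable {E : Type*} [NormedAddCommGroup E] [InnerProductSpace ℝ E] [CompleteSpace E]
  {f : E → ℝ}

theorem inner_fderiv_gradient_apply (x v w : E) :
    ⟪fderiv ℝ (∇ f) x v, w⟫ = fderiv ℝ (fderiv ℝ f) x v w := by
  have h := ((toDual ℝ E).symm.toContinuousLinearEquiv : StrongDual ℝ E ≃L[ℝ] E).comp_fderiv
    (f := fderiv ℝ f) (x := x)
  rw [show fderiv ℝ (∇ f) x = _ from h]
  simp

theorem Differentiable.gradient (hd2 : Differentiable ℝ (fderiv ℝ f)) :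
    Differentiable ℝ (∇ f) :=
  ((toDual ℝ E).symm.toContinuousLinearEquiv :
    StrongDual ℝ E ≃L[ℝ] E).comp_differentiable_iff.2 hd2

theorem ConvexOn.injOn_gradient (hf : ConvexOn ℝ univ f) (hd : Differentiable ℝ f)
    (hd2 : Differentiable ℝ (fderiv ℝ f)) :
    InjOn (∇ f) {x | ∀ v ≠ 0, 0 < fderiv ℝ (fderiv ℝ f) x v v} :=
  (toDual ℝ E).symm.injective.comp_injOn (hf.injOn_fderiv hd hd2)

theorem ConvexOn.image_gradient_subset_range [ProperSpace E] {g : E → ℝ}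
    (hf : ConvexOn ℝ univ f) (hd : Differentiable ℝ f) (hd2 : Differentiable ℝ (fderiv ℝ f))
    (hg : Differentiable ℝ g) (hle : ∀ y, f y ≤ g y) :
    ∇ f '' {x | ∀ v ≠ 0, 0 < fderiv ℝ (fderiv ℝ f) x v v} ⊆ range (∇ g) := by
  rintro _ ⟨x, hx, rfl⟩
  obtain ⟨y, hy⟩ := hf.exists_fderiv_eq_of_le hd (hd2 x).hasFDerivAt hx hg hle
  exact ⟨y, congrArg (toDual ℝ E).symm hy⟩

end Gradient

section Hessian

variable {n : ℕ}

noncomputable def hessianMatrix (F : EuclideanSpace ℝ (Fin n) → ℝ)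
    (x : EuclideanSpace ℝ (Fin n)) : Matrix (Fin n) (Fin n) ℝ :=
  Matrix.of fun i j =>
    iteratedFDeriv ℝ 2 F x ![EuclideanSpace.single i 1, EuclideanSpace.single j 1]

variable {F : EuclideanSpace ℝ (Fin n) → ℝ} {x : EuclideanSpace ℝ (Fin n)}

theorem hessianMatrix_apply (i j : Fin n) :
    hessianMatrix F x i j
      = fderiv ℝ (fderiv ℝ F) x (EuclideanSpace.single i 1) (EuclideanSpace.single j 1) := by
  simp [hessianMatrix, iteratedFDeriv_two_apply]

theorem dotProduct_hessianMatrix_mulVec (c : Fin n → ℝ) :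
    c ⬝ᵥ hessianMatrix F x *ᵥ c
      = fderiv ℝ (fderiv ℝ F) x (WithLp.toLp 2 c) (WithLp.toLp 2 c) := by
  have hc : WithLp.toLp 2 c = ∑ i, c i • EuclideanSpace.single i (1 : ℝ) := by
    simpa using ((EuclideanSpace.basisFun (Fin n) ℝ).sum_repr (WithLp.toLp 2 c)).symm
  rw [hc]
  simp only [dotProduct, Matrix.mulVec, hessianMatrix_apply, Finset.mul_sum, map_sum, map_smul,
    sum_apply, smul_apply, smul_eq_mul]
  rw [Finset.sum_comm]
  exact Finset.sum_congr rfl fun _ _ => Finset.sum_congr rfl fun _ _ => by ring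

theorem isHermitian_hessianMatrix (hF : ContDiff ℝ 2 F) : (hessianMatrix F x).IsHermitian := by
  have hsymm : IsSymmSndFDerivAt ℝ F x :=
    hF.contDiffAt.isSymmSndFDerivAt (by simp [minSmoothness_of_isRCLikeNormedField])
  ext i j
  simpa [hessianMatrix_apply] using hsymm _ _

theorem posSemidef_hessianMatrix (hF : ContDiff ℝ 2 F) (hc : ConvexOn ℝ univ F) :
    (hessianMatrix F x).PosSemidef := by
  refine .of_dotProduct_mulVec_nonneg (isHermitian_hessianMatrix hF) fun c => ?_
  rw [star_trivial, dotProduct_hessianMatrix_mulVec]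
  exact hc.apply_self_nonneg_of_hasFDerivAt_fderiv (hF.differentiable two_ne_zero)
    (hF.differentiable_fderiv_two x).hasFDerivAt _

theorem setOf_det_hessianMatrix_pos_subset (hF : ContDiff ℝ 2 F) (hc : ConvexOn ℝ univ F) :
    {x | 0 < (hessianMatrix F x).det} ⊆ {x | ∀ v ≠ 0, 0 < fderiv ℝ (fderiv ℝ F) x v v} := by
  intro x hdet v hv
  have hpd := (posSemidef_hessianMatrix (x := x) hF hc).posDef_iff_det_ne_zero.2 hdet.ne'
  simpa [dotProduct_hessianMatrix_mulVec] using
    hpd.dotProduct_mulVec_pos (x := v.ofLp) (by simpa using hv)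

theorem continuous_det_hessianMatrix (hF : ContDiff ℝ 2 F) :
    Continuous fun x => (hessianMatrix F x).det :=
  .matrix_det <| continuous_matrix fun _ _ =>
    (continuous_eval_const _).comp (hF.continuous_iteratedFDeriv le_rfl)

theorem det_fderiv_gradient :
    (fderiv ℝ (∇ F) x).det = (hessianMatrix F x).det := by
  set b := (EuclideanSpace.basisFun (Fin n) ℝ).toBasis
  rw [ContinuousLinearMap.det, ← LinearMap.det_toMatrix b, ← Matrix.det_transpose]
  congr 1
  ext i j
  simpa [b, LinearMap.toMatrix_apply, hessianMatrix_apply, EuclideanSpace.inner_single_right]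
    using inner_fderiv_gradient_apply (f := F) x (EuclideanSpace.single i 1)
      (EuclideanSpace.single j 1)

theorem abs_det_fderiv_gradient (hF : ContDiff ℝ 2 F) (hc : ConvexOn ℝ univ F) :
    |(fderiv ℝ (∇ F) x).det| = (hessianMatrix F x).det := by
  rw [det_fderiv_gradient, abs_of_nonneg (posSemidef_hessianMatrix hF hc).det_nonneg]

theorem lintegral_ofReal_det_hessianMatrix_eq_volume_image (hF : ContDiff ℝ 2 F)
    (hc : ConvexOn ℝ univ F) :
    ∫⁻ x, ENNReal.ofReal (hessianMatrix F x).det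
      = volume (∇ F '' {x | 0 < (hessianMatrix F x).det}) := by
  have hS : MeasurableSet {x | 0 < (hessianMatrix F x).det} :=
    (isOpen_lt continuous_const (continuous_det_hessianMatrix hF)).measurableSet
  have hd2 := hF.differentiable_fderiv_two
  rw [← setLIntegral_eq_of_support_subset (s := {x | 0 < (hessianMatrix F x).det})
      fun x hx => ENNReal.ofReal_pos.1 (pos_iff_ne_zero.2 hx),
    ← lintegral_abs_det_fderiv_eq_addHaar_image volume hS
      (fun x _ => (hd2.gradient x).hasFDerivAt.hasFDerivWithinAt)
      ((hc.injOn_gradient (hF.differentiable two_ne_zero) hd2).mono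
        (setOf_det_hessianMatrix_pos_subset hF hc))]
  simp_rw [abs_det_fderiv_gradient hF hc]

theorem volume_range_gradient_le_lintegral_ofReal_det_hessianMatrix (hF : ContDiff ℝ 2 F)
    (hc : ConvexOn ℝ univ F) :
    volume (range (∇ F)) ≤ ∫⁻ x, ENNReal.ofReal (hessianMatrix F x).det := by
  simpa [abs_det_fderiv_gradient hF hc] using addHaar_image_le_lintegral_abs_det_fderiv volume
    MeasurableSet.univ fun x _ =>
      (hF.differentiable_fderiv_two.gradient x).hasFDerivAt.hasFDerivWithinAt

end Hessian

theorem total_monge_ampere_mass_comparison_general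
    (n : ℕ) (F₁ F₂ : EuclideanSpace ℝ (Fin n) → ℝ)
    (h1 : ContDiff ℝ 2 F₁) (h2 : ContDiff ℝ 2 F₂)
    (hc1 : ConvexOn ℝ Set.univ F₁) (hc2 : ConvexOn ℝ Set.univ F₂)
    (hle : ∀ x, F₁ x ≤ F₂ x) :
    ∫⁻ x, ENNReal.ofReal
        (Matrix.det (Matrix.of fun i j =>
          iteratedFDeriv ℝ 2 F₁ x ![EuclideanSpace.single i 1, EuclideanSpace.single j 1]))
      ≤ ∫⁻ x, ENNReal.ofReal
        (Matrix.det (Matrix.of fun i j =>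
          iteratedFDeriv ℝ 2 F₂ x ![EuclideanSpace.single i 1, EuclideanSpace.single j 1])) := by
  calc ∫⁻ x, ENNReal.ofReal (hessianMatrix F₁ x).det
      = volume (∇ F₁ '' {x | 0 < (hessianMatrix F₁ x).det}) :=
        lintegral_ofReal_det_hessianMatrix_eq_volume_image h1 hc1
    _ ≤ volume (range (∇ F₂)) := measure_mono <|
        (image_mono (setOf_det_hessianMatrix_pos_subset h1 hc1)).trans <|
          hc1.image_gradient_subset_range (h1.differentiable two_ne_zero)
            h1.differentiable_fderiv_two (h2.differentiable two_ne_zero) hle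
    _ ≤ ∫⁻ x, ENNReal.ofReal (hessianMatrix F₂ x).det :=
        volume_range_gradient_le_lintegral_ofReal_det_hessianMatrix h2 hc2

/-- If `F₁, F₂ : ℝⁿ → ℝ` are C² convex functions with `F₂(x) → +∞` as
`‖x‖ → +∞` and `F₁ ≤ F₂`, then `∫ det(D²F₁) ≤ ∫ det(D²F₂)` (integrals with respect to
Lebesgue measure, with values in `[0, +∞]`). -/
theorem total_monge_ampere_mass_comparison
    (n : ℕ) (F₁ F₂ : EuclideanSpace ℝ (Fin n) → ℝ)
    (h1 : ContDiff ℝ 2 F₁) (h2 : ContDiff ℝ 2 F₂)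
    (hc1 : ConvexOn ℝ Set.univ F₁) (hc2 : ConvexOn ℝ Set.univ F₂)
    (hinf : Tendsto F₂ (cocompact (EuclideanSpace ℝ (Fin n))) atTop)
    (hle : ∀ x, F₁ x ≤ F₂ x) :
    ∫⁻ x, ENNReal.ofReal
        (Matrix.det (Matrix.of fun i j =>
          iteratedFDeriv ℝ 2 F₁ x ![EuclideanSpace.single i 1, EuclideanSpace.single j 1]))
      ≤ ∫⁻ x, ENNReal.ofReal
        (Matrix.det (Matrix.of fun i j =>
          iteratedFDeriv ℝ 2 F₂ x ![EuclideanSpace.single i 1, EuclideanSpace.single j 1])) :=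
  total_monge_ampere_mass_comparison_general n F₁ F₂ h1 h2 hc1 hc2 hle
end

section
/- Let P ⊂ ℝⁿ be a compact convex set with nonempty interior, with support function F_P. Let F₀ : ℝⁿ → ℝ be a smooth function with everywhere positive definite Hessian such that F_P − C ≤ F₀ ≤ F_P + C on ℝⁿ for some constant C, and let G₀ be the Legendre transform of F₀, so that ∇G₀ : int P → ℝⁿ is the inverse of ∇F₀. Then for every continuous compactly supported function χ on ℝⁿ one has ∫_{ℝⁿ} χ(x) det(D²F₀(x)) dx = ∫_{int P} χ(∇G₀(s)) ds, and in particular ∫_{ℝⁿ} det(D²F₀(x)) dx = vol(P), the Lebesgue measure of P. -/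
open MeasureTheory Filter Topology RealInnerProductSpace

section MongeAux

variable {n : ℕ} {F₀ G₀ : EuclideanSpace ℝ (Fin n) → ℝ} (hF₀ : ContDiff ℝ (⊤ : ℕ∞) F₀)
  {P : Set (EuclideanSpace ℝ (Fin n))} {FP : EuclideanSpace ℝ (Fin n) → ℝ}

local notation "E" => EuclideanSpace ℝ (Fin n)

/-- The inverse of `toDual` over the reals, as a genuine continuous linear equiv. -/
noncomputable def dualIso (n : ℕ) :
    ((EuclideanSpace ℝ (Fin n)) →L[ℝ] ℝ) ≃L[ℝ] EuclideanSpace ℝ (Fin n) where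
  toFun := (InnerProductSpace.toDual ℝ (EuclideanSpace ℝ (Fin n))).symm
  invFun := (InnerProductSpace.toDual ℝ (EuclideanSpace ℝ (Fin n)))
  map_add' φ ψ := by simp
  map_smul' r φ := by simp
  left_inv φ := by simp
  right_inv x := by simp
  continuous_toFun := (InnerProductSpace.toDual ℝ _).symm.continuous
  continuous_invFun := (InnerProductSpace.toDual ℝ _).continuous

/-- The Hessian of `F₀` as a bilinear form. -/
noncomputable def H (F₀ : EuclideanSpace ℝ (Fin n) → ℝ) (x : E) : E →L[ℝ] E →L[ℝ] ℝ :=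
  fderiv ℝ (fderiv ℝ F₀) x

/-- The derivative of the gradient map of `F₀`. -/
noncomputable def D (F₀ : EuclideanSpace ℝ (Fin n) → ℝ) (x : E) :
    EuclideanSpace ℝ (Fin n) →L[ℝ] EuclideanSpace ℝ (Fin n) :=
  ((dualIso n).toContinuousLinearMap).comp (H F₀ x)

/-- The Hessian matrix appearing in the statement. -/
noncomputable def M (F₀ : EuclideanSpace ℝ (Fin n) → ℝ) (x : E) : Matrix (Fin n) (Fin n) ℝ :=
  Matrix.of fun i j =>
    iteratedFDeriv ℝ 2 F₀ x ![EuclideanSpace.single i 1, EuclideanSpace.single j 1]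

include hF₀ in
lemma contDiff_fderiv : ContDiff ℝ (⊤ : ℕ∞) (fderiv ℝ F₀) :=
  (contDiff_infty_iff_fderiv.mp (hF₀.of_le (by simp))).2

include hF₀ in
lemma hasFDerivAt_fderiv (x : E) : HasFDerivAt (fderiv ℝ F₀) (H F₀ x) x :=
  ((contDiff_fderiv hF₀).differentiable (by simp) x).hasFDerivAt

lemma inner_grad (x v : E) : ⟪gradient F₀ x, v⟫ = fderiv ℝ F₀ x v :=
  InnerProductSpace.toDual_symm_apply

include hF₀ in
lemma H_symm (x v w : E) : H F₀ x v w = H F₀ x w v :=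
  second_derivative_symmetric (f' := fderiv ℝ F₀)
    (fun y => ((hF₀.differentiable (by simp)) y).hasFDerivAt)
    (hasFDerivAt_fderiv hF₀ x) v w

lemma H_pos (hHess : ∀ x v, v ≠ 0 → 0 < iteratedFDeriv ℝ 2 F₀ x ![v, v]) (x v : E)
    (hv : v ≠ 0) : 0 < H F₀ x v v := by
  have := hHess x v hv
  rwa [iteratedFDeriv_two_apply] at this

include hF₀ in
lemma hasFDerivAt_grad (x : E) : HasFDerivAt (gradient F₀) (D F₀ x) x := by
  have h2 := ((dualIso n).toContinuousLinearMap).hasFDerivAt.comp x (hasFDerivAt_fderiv hF₀ x)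
  exact h2

lemma inner_D (x v w : E) : ⟪D F₀ x v, w⟫ = H F₀ x v w := by
  show ⟪(InnerProductSpace.toDual ℝ (EuclideanSpace ℝ (Fin n))).symm (H F₀ x v), w⟫ = _
  exact InnerProductSpace.toDual_symm_apply

include hF₀ in
lemma line_hasDerivAt (x v : E) (t : ℝ) :
    HasDerivAt (fun t : ℝ => fderiv ℝ F₀ (x + t • v) v) (H F₀ (x + t • v) v v) t := by
  have hline : HasDerivAt (fun t : ℝ => x + t • v) v t := by
    simpa using ((hasDerivAt_id t).smul_const v).const_add x
  have houter : HasFDerivAt (fun w => fderiv ℝ F₀ w v)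
      ((ContinuousLinearMap.apply ℝ ℝ v).comp (H F₀ (x + t • v))) (x + t • v) :=
    (ContinuousLinearMap.apply ℝ ℝ v).hasFDerivAt.comp _ (hasFDerivAt_fderiv hF₀ _)
  exact houter.comp_hasDerivAt t hline

include hF₀ in
lemma strict_mono_grad (hHess : ∀ x v, v ≠ 0 → 0 < iteratedFDeriv ℝ 2 F₀ x ![v, v])
    (x y : E) (hxy : x ≠ y) :
    fderiv ℝ F₀ x (y - x) < fderiv ℝ F₀ y (y - x) := by
  set v := y - x with hv
  have hvne : v ≠ 0 := sub_ne_zero.mpr (Ne.symm hxy)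
  have hmono : StrictMono (fun t : ℝ => fderiv ℝ F₀ (x + t • v) v) := by
    apply strictMono_of_deriv_pos
    intro t
    rw [(line_hasDerivAt hF₀ x v t).deriv]
    exact H_pos hHess _ _ hvne
  have := hmono zero_lt_one
  simpa [v] using this

include hF₀ in
lemma mono_grad (hHess : ∀ x v, v ≠ 0 → 0 < iteratedFDeriv ℝ 2 F₀ x ![v, v])
    (x y : E) : fderiv ℝ F₀ x (y - x) ≤ fderiv ℝ F₀ y (y - x) := by
  rcases eq_or_ne x y with rfl | h
  · rfl
  · exact (strict_mono_grad hF₀ hHess x y h).le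

include hF₀ in
lemma grad_injective (hHess : ∀ x v, v ≠ 0 → 0 < iteratedFDeriv ℝ 2 F₀ x ![v, v]) :
    Function.Injective (gradient F₀) := by
  intro x y hxy
  by_contra h
  have h1 := strict_mono_grad hF₀ hHess x y h
  have e1 : fderiv ℝ F₀ x = fderiv ℝ F₀ y := by
    have := congrArg (InnerProductSpace.toDual ℝ (EuclideanSpace ℝ (Fin n))) hxy
    simpa [gradient] using this
  rw [e1] at h1
  exact lt_irrefl _ h1

include hF₀ in
lemma convex_ineq (hHess : ∀ x v, v ≠ 0 → 0 < iteratedFDeriv ℝ 2 F₀ x ![v, v])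
    (x y : E) : F₀ x + fderiv ℝ F₀ x (y - x) ≤ F₀ y := by
  rcases eq_or_ne x y with rfl | hxy
  · simp
  set v := y - x with hv
  have hvne : v ≠ 0 := sub_ne_zero.mpr (Ne.symm hxy)
  have hψ : ∀ t : ℝ, HasDerivAt (fun t : ℝ => F₀ (x + t • v)) (fderiv ℝ F₀ (x + t • v) v) t := by
    intro t
    have hline : HasDerivAt (fun t : ℝ => x + t • v) v t := by
      simpa using ((hasDerivAt_id t).smul_const v).const_add x
    exact ((hF₀.differentiable (by simp) _).hasFDerivAt).comp_hasDerivAt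
      t hline
  obtain ⟨c, hc, hceq⟩ := exists_hasDerivAt_eq_slope (fun t : ℝ => F₀ (x + t • v))
      (fun t => fderiv ℝ F₀ (x + t • v) v) zero_lt_one
      (fun t _ => (hψ t).continuousAt.continuousWithinAt) (fun t _ => hψ t)
  have h2 : fderiv ℝ F₀ x v ≤ fderiv ℝ F₀ (x + c • v) v := by
    have := mono_grad hF₀ hHess x (x + c • v)
    have hc0 : (0:ℝ) < c := hc.1
    simp only [add_sub_cancel_left] at this
    rw [_root_.map_smul, _root_.map_smul, smul_eq_mul, smul_eq_mul] at this
    exact le_of_mul_le_mul_left (by linarith) hc0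
  have h3 : F₀ (x + (1:ℝ) • v) - F₀ (x + (0:ℝ) • v) = fderiv ℝ F₀ (x + c • v) v := by
    rw [hceq]; ring
  have h4 : F₀ y - F₀ x = fderiv ℝ F₀ (x + c • v) v := by
    simpa [v] using h3
  linarith

lemma FP_ge (hFP : ∀ x, IsGreatest ((fun s => ⟪x, s⟫) '' P) (FP x))
    {s : E} (hs : s ∈ P) (x : E) : ⟪x, s⟫ ≤ FP x :=
  (hFP x).2 ⟨s, hs, rfl⟩

lemma mem_P_of_le (hPc : IsCompact P) (hPconv : Convex ℝ P)
    (hFP : ∀ x, IsGreatest ((fun s => ⟪x, s⟫) '' P) (FP x))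
    {s₀ : E} (h : ∀ y, ⟪y, s₀⟫ ≤ FP y) : s₀ ∈ P := by
  by_contra hs
  obtain ⟨f, u, hfu, huf⟩ := geometric_hahn_banach_closed_point hPconv hPc.isClosed hs
  set y := (InnerProductSpace.toDual ℝ (EuclideanSpace ℝ (Fin n))).symm f with hy
  have hf : ∀ a, f a = ⟪y, a⟫ := fun a => (InnerProductSpace.toDual_symm_apply).symm
  obtain ⟨s, hsP, hse⟩ := (hFP y).1
  have h1 : FP y < u := by
    rw [← hse]
    simpa [← hf s] using hfu s hsP
  rw [hf s₀] at huf
  linarith [h y]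

include hF₀ in
lemma grad_mem (hHess : ∀ x v, v ≠ 0 → 0 < iteratedFDeriv ℝ 2 F₀ x ![v, v])
    (hPc : IsCompact P) (hPconv : Convex ℝ P)
    (hFP : ∀ x, IsGreatest ((fun s => ⟪x, s⟫) '' P) (FP x))
    (C : ℝ) (hbound : ∀ x, FP x - C ≤ F₀ x ∧ F₀ x ≤ FP x + C)
    (x : E) : gradient F₀ x ∈ P := by
  apply mem_P_of_le hPc hPconv hFP
  intro y
  have hyg : ⟪y, gradient F₀ x⟫ = fderiv ℝ F₀ x y := by
    rw [real_inner_comm]; exact InnerProductSpace.toDual_symm_apply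
  rw [hyg]
  set K := FP x + C - F₀ x with hK
  have hK0 : 0 ≤ K := by have := (hbound x).2; linarith
  have key : ∀ t : ℝ, 0 < t → t * fderiv ℝ F₀ x y ≤ t * FP y + K := by
    intro t ht
    have h1 := convex_ineq hF₀ hHess x (x + t • y)
    simp only [add_sub_cancel_left, _root_.map_smul, smul_eq_mul] at h1
    have h2 : F₀ (x + t • y) ≤ FP (x + t • y) + C := (hbound _).2
    have h3 : FP (x + t • y) ≤ FP x + t * FP y := by
      obtain ⟨s, hsP, hse⟩ := (hFP (x + t • y)).1
      rw [← hse]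
      show ⟪x + t • y, s⟫ ≤ _
      rw [inner_add_left, real_inner_smul_left]
      have := FP_ge hFP hsP x
      have h4 := FP_ge hFP hsP y
      nlinarith
    linarith
  by_contra hlt
  push_neg at hlt
  set δ := fderiv ℝ F₀ x y - FP y with hδ
  have hδ0 : 0 < δ := by linarith
  have := key ((K + 1)/δ) (by positivity)
  have hne : δ ≠ 0 := ne_of_gt hδ0
  have hexp : (K + 1)/δ * fderiv ℝ F₀ x y - (K + 1)/δ * FP y = K + 1 := by
    field_simp
    ring
  linarith

include hF₀ in
lemma contDiff_grad : ContDiff ℝ (⊤ : ℕ∞) (gradient F₀) := by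
  have : gradient F₀ = fun x => (dualIso n) (fderiv ℝ F₀ x) := rfl
  rw [this]
  exact (dualIso n).toContinuousLinearMap.contDiff.comp (contDiff_fderiv hF₀)

/-- `D F₀ x` as a continuous linear equivalence. -/
noncomputable def Deq (hHess : ∀ x v, v ≠ 0 → 0 < iteratedFDeriv ℝ 2 F₀ x ![v, v]) (x : E) :
    EuclideanSpace ℝ (Fin n) ≃L[ℝ] EuclideanSpace ℝ (Fin n) := by
  have hinj : Function.Injective (D F₀ x) := by
    intro v w hvw
    by_contra hne
    have h0 : D F₀ x (v - w) = 0 := by rw [map_sub, hvw, sub_self]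
    have := H_pos hHess x (v - w) (sub_ne_zero.mpr hne)
    rw [← inner_D x (v-w) (v-w), h0, inner_zero_left] at this
    exact lt_irrefl _ this
  have hbij : Function.Bijective ((D F₀ x) : EuclideanSpace ℝ (Fin n) →ₗ[ℝ]
      EuclideanSpace ℝ (Fin n)) :=
    ⟨hinj, (LinearMap.injective_iff_surjective).mp hinj⟩
  exact (LinearEquiv.ofBijective _ hbij).toContinuousLinearEquiv

lemma Deq_coe (hHess : ∀ x v, v ≠ 0 → 0 < iteratedFDeriv ℝ 2 F₀ x ![v, v]) (x : E) :
    ((Deq hHess x) : EuclideanSpace ℝ (Fin n) →L[ℝ] EuclideanSpace ℝ (Fin n)) = D F₀ x := by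
  ext v
  rfl

include hF₀ in
lemma strict_fderiv_grad (hHess : ∀ x v, v ≠ 0 → 0 < iteratedFDeriv ℝ 2 F₀ x ![v, v]) (x : E) :
    HasStrictFDerivAt (gradient F₀) ((Deq hHess x : EuclideanSpace ℝ (Fin n) →L[ℝ]
      EuclideanSpace ℝ (Fin n))) x := by
  rw [Deq_coe]
  exact (contDiff_grad hF₀).contDiffAt.hasStrictFDerivAt'
    (hasFDerivAt_grad hF₀ x) (by simp)

include hF₀ in
lemma range_open (hHess : ∀ x v, v ≠ 0 → 0 < iteratedFDeriv ℝ 2 F₀ x ![v, v]) :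
    IsOpen (Set.range (gradient F₀)) := by
  rw [isOpen_iff_mem_nhds]
  rintro s ⟨x, rfl⟩
  have := (strict_fderiv_grad hF₀ hHess x).map_nhds_eq_of_equiv
  rw [← this]
  rw [Filter.mem_map]
  exact Filter.univ_mem' (fun y => Set.mem_range_self y)

include hF₀ in
lemma grad_surj_on (hFP : ∀ x, IsGreatest ((fun s => ⟪x, s⟫) '' P) (FP x))
    (C : ℝ) (hbound : ∀ x, FP x - C ≤ F₀ x ∧ F₀ x ≤ FP x + C)
    {s : E} (hs : s ∈ interior P) : ∃ x, gradient F₀ x = s := by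
  obtain ⟨ε, hε, hball⟩ := Metric.isOpen_iff.mp isOpen_interior s hs
  have hsP : ∀ u ∈ Metric.ball s ε, u ∈ P := fun u hu => interior_subset (hball hu)
  set ε' := ε / 2 with hε'
  have hε'0 : 0 < ε' := by positivity
  have hcoer : ∀ x : E, ⟪s, x⟫ + ε' * ‖x‖ ≤ FP x := by
    intro x
    rcases eq_or_ne x 0 with rfl | hx0
    · simp only [inner_zero_right, norm_zero, mul_zero, add_zero]
      have := (hFP 0).2 ⟨s, hsP s (Metric.mem_ball_self hε), inner_zero_left s⟩
      linarith
    · have hxoc : 0 < ‖x‖ := norm_pos_iff.mpr hx0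
      set u := s + (ε' * ‖x‖⁻¹) • x with hu
      have hum : u ∈ P := by
        apply hsP
        rw [Metric.mem_ball, dist_eq_norm]
        have : u - s = (ε' * ‖x‖⁻¹) • x := by rw [hu]; abel
        rw [this, norm_smul]
        simp only [Real.norm_eq_abs, abs_of_pos (by positivity : (0:ℝ) < ε' * ‖x‖⁻¹)]
        rw [mul_assoc, inv_mul_cancel₀ (ne_of_gt hxoc), mul_one]
        linarith
      have := (hFP x).2 ⟨u, hum, rfl⟩
      simp only [hu, inner_add_right, real_inner_smul_right,
        real_inner_self_eq_norm_mul_norm] at this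
      have hsimp : ε' * ‖x‖⁻¹ * (‖x‖ * ‖x‖) = ε' * ‖x‖ := by
        field_simp
      rw [hsimp] at this
      rwa [real_inner_comm] at this
  set h : E → ℝ := fun x => ⟪s, x⟫ - F₀ x with hh
  have hbd : ∀ x, h x ≤ C - ε' * ‖x‖ := by
    intro x
    have h1 := (hbound x).1
    have h2 := hcoer x
    simp only [hh]
    linarith
  have hcont : Continuous h := by
    apply Continuous.sub _ hF₀.continuous
    exact (innerSL ℝ s).continuous
  set R : ℝ := max ((C - h 0 + 1) / ε') 0 with hR
  have hR0 : 0 ≤ R := le_max_right _ _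
  obtain ⟨x₀, hx₀K, hx₀max⟩ := (isCompact_closedBall (0:E) R).exists_isMaxOn
    ⟨0, Metric.mem_closedBall_self hR0⟩ hcont.continuousOn
  have hglobal : ∀ x, h x ≤ h x₀ := by
    intro x
    by_cases hx : x ∈ Metric.closedBall (0:E) R
    · exact hx₀max hx
    · have hxn : R < ‖x‖ := by
        rw [Metric.mem_closedBall, dist_zero_right, not_le] at hx
        exact hx
      have h1 : (C - h 0 + 1) / ε' < ‖x‖ := lt_of_le_of_lt (le_max_left _ _) hxn
      have h2 : C - h 0 + 1 < ε' * ‖x‖ := by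
        rw [div_lt_iff₀ hε'0] at h1
        linarith
      have h3 := hbd x
      have h4 : h 0 ≤ h x₀ := hx₀max (Metric.mem_closedBall_self hR0)
      linarith
  have hloc : IsLocalMax h x₀ := Filter.Eventually.of_forall hglobal
  have hdiff : HasFDerivAt h ((innerSL ℝ s) - fderiv ℝ F₀ x₀) x₀ :=
    ((innerSL ℝ s).hasFDerivAt).sub
      ((hF₀.differentiable (by simp)) x₀).hasFDerivAt
  have hzero := hloc.hasFDerivAt_eq_zero hdiff
  have heq : fderiv ℝ F₀ x₀ = innerSL ℝ s := (sub_eq_zero.mp hzero).symm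
  refine ⟨x₀, ?_⟩
  have : innerSL ℝ s = InnerProductSpace.toDual ℝ (EuclideanSpace ℝ (Fin n)) s := rfl
  rw [gradient, heq, this, LinearIsometryEquiv.symm_apply_apply]

include hF₀ in
lemma legendre_eq (hHess : ∀ x v, v ≠ 0 → 0 < iteratedFDeriv ℝ 2 F₀ x ![v, v])
    (hG₀ : ∀ s ∈ interior P,
      (G₀ s : EReal) = ⨆ x, ((⟪x, s⟫ - F₀ x : ℝ) : EReal))
    {s a : E} (hs : s ∈ interior P) (ha : gradient F₀ a = s) :
    G₀ s = ⟪a, s⟫ - F₀ a := by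
  have hub : ∀ x : E, ⟪x, s⟫ - F₀ x ≤ ⟪a, s⟫ - F₀ a := by
    intro x
    have h1 := convex_ineq hF₀ hHess a x
    have h2 : fderiv ℝ F₀ a (x - a) = ⟪s, x - a⟫ := by
      rw [← ha, inner_grad]
    rw [h2, inner_sub_right] at h1
    have h3 : ⟪x, s⟫ = ⟪s, x⟫ := real_inner_comm _ _
    have h4 : ⟪a, s⟫ = ⟪s, a⟫ := real_inner_comm _ _
    linarith
  have hsup : (⨆ x : E, ((⟪x, s⟫ - F₀ x : ℝ) : EReal)) = ((⟪a, s⟫ - F₀ a : ℝ) : EReal) := by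
    apply le_antisymm
    · exact iSup_le fun x => EReal.coe_le_coe_iff.mpr (hub x)
    · exact le_iSup (fun x : E => ((⟪x, s⟫ - F₀ x : ℝ) : EReal)) a
  have := hG₀ s hs
  rw [hsup] at this
  exact_mod_cast this

include hF₀ in
lemma hasFDerivAt_G (hHess : ∀ x v, v ≠ 0 → 0 < iteratedFDeriv ℝ 2 F₀ x ![v, v])
    (hG₀ : ∀ s ∈ interior P,
      (G₀ s : EReal) = ⨆ x, ((⟪x, s⟫ - F₀ x : ℝ) : EReal))
    {s a : E} (hs : s ∈ interior P) (ha : gradient F₀ a = s)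
    (L : EuclideanSpace ℝ (Fin n) ≃L[ℝ] EuclideanSpace ℝ (Fin n))
    (hsf : HasStrictFDerivAt (gradient F₀)
      (L : EuclideanSpace ℝ (Fin n) →L[ℝ] EuclideanSpace ℝ (Fin n)) a) :
    HasFDerivAt G₀ (innerSL ℝ a) s := by
  classical
  set Φ := gradient F₀ with hΦ
  set li := hsf.localInverse Φ L a with hli
  have hlia : li s = a := by rw [hli, ← ha]; exact hsf.localInverse_apply_image
  have hliD : HasFDerivAt li ((L.symm : EuclideanSpace ℝ (Fin n) →L[ℝ]
      EuclideanSpace ℝ (Fin n))) s := by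
    have := hsf.to_localInverse
    rw [ha] at this
    exact this.hasFDerivAt
  have hev : G₀ =ᶠ[nhds s] fun y => ⟪li y, y⟫ - F₀ (li y) := by
    have h1 : ∀ᶠ y in nhds s, Φ (li y) = y := by
      have := hsf.eventually_right_inverse
      rwa [ha] at this
    have h2 : ∀ᶠ y in nhds s, y ∈ interior P := isOpen_interior.mem_nhds hs
    filter_upwards [h1, h2] with y hy1 hy2
    exact legendre_eq hF₀ hHess hG₀ hy2 hy1
  have hFa : HasFDerivAt F₀ (fderiv ℝ F₀ a) a :=
    ((hF₀.differentiable (by simp)) a).hasFDerivAt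
  have hinner : HasFDerivAt (fun y => ⟪li y, y⟫)
      ((fderivInnerCLM ℝ (li s, s)).comp ((L.symm : EuclideanSpace ℝ (Fin n) →L[ℝ]
        EuclideanSpace ℝ (Fin n)).prod (ContinuousLinearMap.id ℝ _))) s :=
    hliD.inner ℝ (hasFDerivAt_id s)
  have hcomp : HasFDerivAt (fun y => F₀ (li y))
      ((fderiv ℝ F₀ a).comp (L.symm : EuclideanSpace ℝ (Fin n) →L[ℝ]
        EuclideanSpace ℝ (Fin n))) s := by
    have : HasFDerivAt F₀ (fderiv ℝ F₀ a) (li s) := by rwa [hlia]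
    exact this.comp s hliD
  have hψ := hinner.sub hcomp
  have hG : HasFDerivAt G₀ _ s := hψ.congr_of_eventuallyEq hev
  refine hG.congr_fderiv ?_
  ext w
  have h1 : ∀ u : E, fderiv ℝ F₀ a u = ⟪s, u⟫ := fun u => by rw [← ha, inner_grad]
  simp only [ContinuousLinearMap.coe_comp', Function.comp_apply, ContinuousLinearMap.prod_apply,
    ContinuousLinearMap.coe_id', id_eq, fderivInnerCLM_apply, hlia, h1,
    ContinuousLinearMap.sub_apply]
  rw [innerSL_apply_apply]
  have h2 := real_inner_comm ((L.symm : EuclideanSpace ℝ (Fin n) →L[ℝ]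
    EuclideanSpace ℝ (Fin n)) w) s
  linarith

lemma M_apply (x : E) (i j : Fin n) :
    M F₀ x i j = H F₀ x (EuclideanSpace.single i 1) (EuclideanSpace.single j 1) := by
  simp only [M, Matrix.of_apply]
  rw [iteratedFDeriv_two_apply]
  rfl

lemma det_D (x : E) : (D F₀ x).det = (M F₀ x).det := by
  classical
  set b := (EuclideanSpace.basisFun (Fin n) ℝ).toBasis with hb
  have key : LinearMap.toMatrix b b ((D F₀ x) : EuclideanSpace ℝ (Fin n) →ₗ[ℝ]
      EuclideanSpace ℝ (Fin n)) = (M F₀ x).transpose := by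
    ext i j
    rw [LinearMap.toMatrix_apply, Matrix.transpose_apply, M_apply]
    have h1 : b j = EuclideanSpace.single j 1 := by
      rw [hb, OrthonormalBasis.coe_toBasis, EuclideanSpace.basisFun_apply]
    have h2 : ∀ y : EuclideanSpace ℝ (Fin n), b.repr y i = y i := fun y => by
      rw [hb, OrthonormalBasis.coe_toBasis_repr_apply, EuclideanSpace.basisFun_repr]
    rw [h1, h2]
    show (D F₀ x (EuclideanSpace.single j 1)) i = _
    have h3 : (D F₀ x (EuclideanSpace.single j 1)) i
        = ⟪D F₀ x (EuclideanSpace.single j 1), EuclideanSpace.single i 1⟫ := by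
      rw [EuclideanSpace.inner_single_right]
      simp
    rw [h3, inner_D]
  have : (D F₀ x).det = LinearMap.det ((D F₀ x) : EuclideanSpace ℝ (Fin n) →ₗ[ℝ]
      EuclideanSpace ℝ (Fin n)) := rfl
  rw [this, ← LinearMap.det_toMatrix b, key, Matrix.det_transpose]

include hF₀ in
lemma M_posdef (hHess : ∀ x v, v ≠ 0 → 0 < iteratedFDeriv ℝ 2 F₀ x ![v, v]) (x : E) :
    (M F₀ x).PosDef := by
  classical
  constructor
  · ext i j
    simp only [Matrix.conjTranspose_apply, star_trivial]
    rw [M_apply, M_apply, H_symm hF₀]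
  · intro v hv
    set w : EuclideanSpace ℝ (Fin n) := (WithLp.equiv 2 (Fin n → ℝ)).symm v with hw
    have hwv : ∀ i, w i = v i := fun i => rfl
    have hwne : w ≠ 0 := by
      intro h
      apply hv
      ext i
      have := congrFun (congrArg (fun z : EuclideanSpace ℝ (Fin n) => (z : Fin n → ℝ)) h) i
      simpa [hwv] using this
    have hpos := H_pos hHess x w hwne
    have hsum : w = ∑ i, w i • EuclideanSpace.single i 1 := by
      have := ((EuclideanSpace.basisFun (Fin n) ℝ).toBasis.sum_repr w).symm
      simpa [OrthonormalBasis.coe_toBasis, EuclideanSpace.basisFun_apply,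
        OrthonormalBasis.coe_toBasis_repr_apply, EuclideanSpace.basisFun_repr] using this
    have hexp2 : ∀ u : EuclideanSpace ℝ (Fin n),
        H F₀ x u w = ∑ j, H F₀ x u (EuclideanSpace.single j 1) * w j := by
      intro u
      conv_lhs => rw [hsum]
      rw [map_sum]
      apply Finset.sum_congr rfl
      intro j _
      rw [_root_.map_smul, smul_eq_mul, mul_comm]
    have hexp1 : ∀ z : EuclideanSpace ℝ (Fin n),
        H F₀ x w z = ∑ i, w i * H F₀ x (EuclideanSpace.single i 1) z := by
      intro z
      conv_lhs => rw [hsum]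
      rw [map_sum, ContinuousLinearMap.sum_apply]
      apply Finset.sum_congr rfl
      intro i _
      rw [_root_.map_smul, ContinuousLinearMap.smul_apply, smul_eq_mul]
    have hexp : H F₀ x w w = ∑ i, ∑ j, v i * (M F₀ x i j * v j) := by
      rw [hexp2 w]
      have : ∀ j, H F₀ x w (EuclideanSpace.single j 1) * w j
          = ∑ i, w i * H F₀ x (EuclideanSpace.single i 1) (EuclideanSpace.single j 1) * w j := by
        intro j
        rw [hexp1, Finset.sum_mul]
      rw [Finset.sum_congr rfl (fun j _ => this j), Finset.sum_comm]
      apply Finset.sum_congr rfl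
      intro i _
      apply Finset.sum_congr rfl
      intro j _
      rw [M_apply, hwv, hwv]
      ring
    have hdot : dotProduct (star v) ((M F₀ x).mulVec v)
        = ∑ i, ∑ j, v i * (M F₀ x i j * v j) := by
      simp only [dotProduct, Matrix.mulVec, star_trivial, Pi.star_apply]
      apply Finset.sum_congr rfl
      intro i _
      rw [Finset.mul_sum]
    simp only [Finsupp.sum_fintype, star_trivial, zero_mul, mul_zero, Finset.sum_const_zero, implies_true]
    have h' : ∑ i, ∑ j, v i * M F₀ x i j * v j = H F₀ x w w := by
      rw [hexp]; simp only [mul_assoc]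
    linarith

include hF₀ in
lemma det_M_pos (hHess : ∀ x v, v ≠ 0 → 0 < iteratedFDeriv ℝ 2 F₀ x ![v, v]) (x : E) :
    0 < (M F₀ x).det := (M_posdef hF₀ hHess x).det_pos

end MongeAux

/-- With `P`, `F_P`, `F₀`, `G₀` as in Statement 5 (so `∇G₀ : int P → ℝⁿ` is
the inverse of `∇F₀`), for every continuous compactly supported `χ : ℝⁿ → ℝ` one has
`∫_{ℝⁿ} χ(x) det(D²F₀(x)) dx = ∫_{int P} χ(∇G₀(s)) ds`, and in particular
`∫_{ℝⁿ} det(D²F₀(x)) dx = vol(P)`. -/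
theorem change_of_variables_monge_ampere
    (n : ℕ) (P : Set (EuclideanSpace ℝ (Fin n)))
    (hPc : IsCompact P) (hPconv : Convex ℝ P) (hPint : (interior P).Nonempty)
    (FP : EuclideanSpace ℝ (Fin n) → ℝ)
    (hFP : ∀ x, IsGreatest ((fun s => ⟪x, s⟫) '' P) (FP x))
    (F₀ : EuclideanSpace ℝ (Fin n) → ℝ)
    (hF₀ : ContDiff ℝ (⊤ : ℕ∞) F₀)
    (hHess : ∀ x v, v ≠ 0 → 0 < iteratedFDeriv ℝ 2 F₀ x ![v, v])
    (C : ℝ) (hbound : ∀ x, FP x - C ≤ F₀ x ∧ F₀ x ≤ FP x + C)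
    (G₀ : EuclideanSpace ℝ (Fin n) → ℝ)
    (hG₀ : ∀ s ∈ interior P,
      (G₀ s : EReal) = ⨆ x, ((⟪x, s⟫ - F₀ x : ℝ) : EReal)) :
    (∀ χ : EuclideanSpace ℝ (Fin n) → ℝ, Continuous χ → HasCompactSupport χ →
      ∫ x, χ x * Matrix.det (Matrix.of fun i j =>
          iteratedFDeriv ℝ 2 F₀ x ![EuclideanSpace.single i 1, EuclideanSpace.single j 1])
        = ∫ s in interior P, χ (gradient G₀ s)) ∧
      ∫⁻ x, ENNReal.ofReal (Matrix.det (Matrix.of fun i j =>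
          iteratedFDeriv ℝ 2 F₀ x ![EuclideanSpace.single i 1, EuclideanSpace.single j 1]))
        = volume P := by
  classical
  set Φ := gradient F₀ with hΦ
  have hinj : Function.Injective Φ := grad_injective hF₀ hHess
  have hDx : ∀ x, HasFDerivAt Φ (D F₀ x) x := fun x => hasFDerivAt_grad hF₀ x
  have hrange : Set.range Φ = interior P := by
    apply le_antisymm
    · apply interior_maximal
      · rintro s ⟨x, rfl⟩
        exact grad_mem hF₀ hHess hPc hPconv hFP C hbound x
      · exact range_open hF₀ hHess
    · intro s hs
      exact grad_surj_on hF₀ hFP C hbound hs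
  set g : EuclideanSpace ℝ (Fin n) → EuclideanSpace ℝ (Fin n) := Function.invFun Φ with hg
  have hginv : ∀ s ∈ interior P, Φ (g s) = s := by
    intro s hs
    exact Function.invFun_eq (grad_surj_on hF₀ hFP C hbound hs)
  have hgleft : ∀ x, g (Φ x) = x := fun x => Function.leftInverse_invFun hinj x
  have hgradG : ∀ s ∈ interior P, gradient G₀ s = g s := by
    intro s hs
    have ha : Φ (g s) = s := hginv s hs
    have hfd := hasFDerivAt_G hF₀ hHess hG₀ hs ha (Deq hHess (g s))
      (strict_fderiv_grad hF₀ hHess (g s))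
    rw [gradient, hfd.fderiv]
    have : innerSL ℝ (g s) = InnerProductSpace.toDual ℝ (EuclideanSpace ℝ (Fin n)) (g s) := rfl
    rw [this, LinearIsometryEquiv.symm_apply_apply]
  have hf' : ∀ x ∈ (Set.univ : Set (EuclideanSpace ℝ (Fin n))),
      HasFDerivWithinAt Φ (D F₀ x) Set.univ x := fun x _ => (hDx x).hasFDerivWithinAt
  have habs : ∀ x, |(D F₀ x).det| = (M F₀ x).det := by
    intro x
    rw [det_D, abs_of_pos (det_M_pos hF₀ hHess x)]
  constructor
  · intro χ hχc hχs
    have key := integral_image_eq_integral_abs_det_fderiv_smul volume MeasurableSet.univ hf'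
      (hinj.injOn) (fun s => χ (gradient G₀ s))
    rw [Set.image_univ, hrange] at key
    rw [key, MeasureTheory.setIntegral_univ]
    apply integral_congr_ae
    apply Filter.Eventually.of_forall
    intro x
    have hx : Φ x ∈ interior P := hrange ▸ Set.mem_range_self x
    simp only [hgradG (Φ x) hx, hgleft x, habs x, smul_eq_mul]
    rw [mul_comm]
    rfl
  · have key := lintegral_image_eq_lintegral_abs_det_fderiv_mul volume MeasurableSet.univ hf'
      (hinj.injOn) (fun _ => (1:ENNReal))
    rw [Set.image_univ, hrange, setLIntegral_one, MeasureTheory.setLIntegral_univ] at key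
    have hPvol : volume (interior P) = volume P := by
      apply le_antisymm (measure_mono interior_subset)
      have h1 : P ⊆ interior P ∪ frontier P := by
        rw [← closure_eq_interior_union_frontier]
        exact subset_closure
      calc volume P ≤ volume (interior P ∪ frontier P) := measure_mono h1
        _ ≤ volume (interior P) + volume (frontier P) := measure_union_le _ _
        _ = volume (interior P) := by rw [hPconv.addHaar_frontier volume, add_zero]
    rw [← hPvol, key]
    apply lintegral_congr
    intro x
    rw [mul_one, habs x]
    rfl
end

section
/- Let P ⊂ ℝⁿ be a compact convex set with 0 in its interior and support function F_P. Let F : ℝⁿ → ℝ be a convex function with Legendre transform G, such that F ≤ F_P + C on ℝⁿ for some constant C. The following are equivalent: (i) G(s) < +∞ for all s ∈ int P; (ii) for every ε ∈ (0, 1) there exists M_ε > 0 such that F(x) ≥ (1 − ε)F_P(x) − M_ε for all x ∈ ℝⁿ. -/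
open MeasureTheory Filter Topology RealInnerProductSpace

/-!
If `G` is finite on `int P`, it is a supremum of affine functions, hence convex and so
continuous there; it is therefore bounded, by `M`, on the compact set `(1 - ε) P ⊆ int P`, and
testing `G((1 - ε) t) ≤ M` with a maximiser `t ∈ P` of `⟪x, ·⟫` gives `F(x) ≥ (1 - ε) F_P(x) - M`.
Conversely, every `s ∈ int P` satisfies `c s ∈ P` for some `c > 1`, so
`⟪x, s⟫ ≤ c⁻¹ F_P(x) ≤ F(x) + M` for the growth constant `M` of `ε = 1 - c⁻¹`, i.e. `G(s) ≤ M`.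
-/

open scoped Pointwise

theorem Convex.smul_subset_interior_of_zero_mem_interior {𝕜 E : Type*} [Field 𝕜] [LinearOrder 𝕜]
    [IsStrictOrderedRing 𝕜] [AddCommGroup E] [Module 𝕜 E] [TopologicalSpace E]
    [IsTopologicalAddGroup E] [ContinuousConstSMul 𝕜 E] {P : Set E} (hP : Convex 𝕜 P)
    (h0 : (0 : E) ∈ interior P) {c : 𝕜} (hc₀ : 0 ≤ c) (hc₁ : c < 1) :
    c • P ⊆ interior P := by
  rintro _ ⟨s, hs, rfl⟩
  simpa using hP.combo_interior_self_mem_interior h0 hs (sub_pos.2 hc₁) hc₀ (sub_add_cancel 1 c)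

theorem exists_one_lt_smul_mem_of_mem_interior {E : Type*} [AddCommGroup E] [Module ℝ E]
    [TopologicalSpace E] [ContinuousSMul ℝ E] {P : Set E} {s : E} (hs : s ∈ interior P) :
    ∃ c : ℝ, 1 < c ∧ c • s ∈ P := by
  have hlim : Tendsto (fun c : ℝ => c • s) (𝓝[>] 1) (𝓝 s) := by
    have hcont : Continuous fun c : ℝ => c • s := continuous_id.smul continuous_const
    simpa using (hcont.tendsto 1).mono_left nhdsWithin_le_nhds
  obtain ⟨c, hcP, hc⟩ :=
    ((hlim.eventually (mem_interior_iff_mem_nhds.1 hs)).and self_mem_nhdsWithin).exists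
  exact ⟨c, hc, hcP⟩

section LegendreTransform

variable {E : Type*} [NormedAddCommGroup E] [InnerProductSpace ℝ E]

noncomputable def legendreTransform (F : E → ℝ) (s : E) : EReal :=
  ⨆ x, ((⟪x, s⟫ - F x : ℝ) : EReal)

variable {F : E → ℝ} {s : E}

theorem legendreTransform_le_coe_iff {c : ℝ} :
    legendreTransform F s ≤ c ↔ ∀ x, ⟪x, s⟫ - F x ≤ c := by
  simp only [legendreTransform, iSup_le_iff, EReal.coe_le_coe_iff]

theorem legendreTransform_ne_bot : legendreTransform F s ≠ ⊥ :=
  ne_bot_of_le_ne_bot (EReal.coe_ne_bot _)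
    (le_iSup (fun x => ((⟪x, s⟫ - F x : ℝ) : EReal)) 0)

theorem inner_sub_le_toReal_legendreTransform (hs : legendreTransform F s < ⊤) (x : E) :
    ⟪x, s⟫ - F x ≤ (legendreTransform F s).toReal :=
  legendreTransform_le_coe_iff.1 (EReal.coe_toReal hs.ne legendreTransform_ne_bot).ge x

theorem convexOn_toReal_legendreTransform {S : Set E} (hS : Convex ℝ S)
    (hfin : ∀ s ∈ S, legendreTransform F s < ⊤) :
    ConvexOn ℝ S (fun s => (legendreTransform F s).toReal) := by
  refine ⟨hS, fun s hs t ht a b ha hb hab => ?_⟩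
  have hbound : legendreTransform F (a • s + b • t) ≤
      ((a * (legendreTransform F s).toReal + b * (legendreTransform F t).toReal : ℝ) : EReal) := by
    refine legendreTransform_le_coe_iff.2 fun x => ?_
    have hsx := mul_le_mul_of_nonneg_left (inner_sub_le_toReal_legendreTransform (hfin s hs) x) ha
    have htx := mul_le_mul_of_nonneg_left (inner_sub_le_toReal_legendreTransform (hfin t ht) x) hb
    have hF : F x = a * F x + b * F x := by rw [← add_mul, hab, one_mul]
    rw [inner_add_right, real_inner_smul_right, real_inner_smul_right, hF]
    linarith
  have hfin' := hfin _ (hS hs ht ha hb hab)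
  rwa [← EReal.coe_toReal hfin'.ne legendreTransform_ne_bot, EReal.coe_le_coe_iff] at hbound

theorem exists_bound_inner_sub_of_legendreTransform_lt_top [FiniteDimensional ℝ E] {U K : Set E}
    (hU : IsOpen U) (hUc : Convex ℝ U) (hfin : ∀ s ∈ U, legendreTransform F s < ⊤)
    (hK : IsCompact K) (hKU : K ⊆ U) : ∃ B, ∀ s ∈ K, ∀ x, ⟪x, s⟫ - F x ≤ B := by
  have hcont := (convexOn_toReal_legendreTransform hUc hfin).continuousOn hU
  obtain ⟨B, hB⟩ := hK.bddAbove_image (hcont.mono hKU)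
  exact ⟨B, fun s hs x =>
    (inner_sub_le_toReal_legendreTransform (hfin s (hKU hs)) x).trans (hB ⟨s, hs, rfl⟩)⟩

theorem legendreTransform_le_of_inner_smul_le {FP : E → ℝ} {c M : ℝ} (hc : 0 < c)
    (hFP : ∀ x, ⟪x, c • s⟫ ≤ FP x) (hM : ∀ x, c⁻¹ * FP x - M ≤ F x) :
    legendreTransform F s ≤ M := by
  refine legendreTransform_le_coe_iff.2 fun x => ?_
  have hinner : ⟪x, s⟫ ≤ c⁻¹ * FP x := by
    rw [le_inv_mul_iff₀ hc, ← real_inner_smul_right]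
    exact hFP x
  linarith [hM x]

variable {P : Set E} {FP : E → ℝ}

theorem exists_growth_bound_of_legendreTransform_lt_top [FiniteDimensional ℝ E]
    (hPc : IsCompact P) (hPconv : Convex ℝ P) (h0 : (0 : E) ∈ interior P)
    (hFP : ∀ x, ∃ t ∈ P, ⟪x, t⟫ = FP x) (hfin : ∀ s ∈ interior P, legendreTransform F s < ⊤)
    {c : ℝ} (hc₀ : 0 ≤ c) (hc₁ : c < 1) : ∃ M, ∀ x, c * FP x - M ≤ F x := by
  obtain ⟨M, hM⟩ := exists_bound_inner_sub_of_legendreTransform_lt_top isOpen_interior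
    hPconv.interior hfin (hPc.smul c) (hPconv.smul_subset_interior_of_zero_mem_interior h0 hc₀ hc₁)
  refine ⟨M, fun x => ?_⟩
  obtain ⟨t, ht, hxt⟩ := hFP x
  have := hM (c • t) (Set.smul_mem_smul_set ht) x
  rw [real_inner_smul_right, hxt] at this
  linarith

theorem legendreTransform_lt_top_of_growth_bound (hFP : ∀ x, ∀ t ∈ P, ⟪x, t⟫ ≤ FP x)
    (hgrowth : ∀ ε ∈ Set.Ioo (0 : ℝ) 1, ∃ M, ∀ x, (1 - ε) * FP x - M ≤ F x)
    (hs : s ∈ interior P) : legendreTransform F s < ⊤ := by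
  obtain ⟨c, hc, hcs⟩ := exists_one_lt_smul_mem_of_mem_interior hs
  have hc₀ : 0 < c := one_pos.trans hc
  obtain ⟨M, hM⟩ := hgrowth (1 - c⁻¹) ⟨sub_pos.2 (inv_lt_one_of_one_lt₀ hc), by
    linarith [inv_pos.2 hc₀]⟩
  refine (legendreTransform_le_of_inner_smul_le hc₀ (fun x => hFP x _ hcs) ?_).trans_lt
    (EReal.coe_lt_top M)
  simpa only [sub_sub_cancel] using hM

end LegendreTransform

theorem legendre_finite_interior_iff_growth_general
    (n : ℕ) (P : Set (EuclideanSpace ℝ (Fin n)))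
    (hPc : IsCompact P) (hPconv : Convex ℝ P)
    (h0 : (0 : EuclideanSpace ℝ (Fin n)) ∈ interior P)
    (FP : EuclideanSpace ℝ (Fin n) → ℝ)
    (hFP : ∀ x, IsGreatest ((fun s => ⟪x, s⟫) '' P) (FP x))
    (F : EuclideanSpace ℝ (Fin n) → ℝ)
    (G : EuclideanSpace ℝ (Fin n) → EReal)
    (hG : ∀ s, G s = ⨆ x, ((⟪x, s⟫ - F x : ℝ) : EReal)) :
    (∀ s ∈ interior P, G s < ⊤) ↔
      (∀ ε ∈ Set.Ioo (0:ℝ) 1, ∃ M > (0:ℝ), ∀ x, (1 - ε) * FP x - M ≤ F x) := by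
  obtain rfl : G = legendreTransform F := funext hG
  constructor
  · intro hfin ε hε
    obtain ⟨M, hM⟩ := exists_growth_bound_of_legendreTransform_lt_top hPc hPconv h0
      (fun x => (hFP x).1) hfin (sub_nonneg.2 hε.2.le) (sub_lt_self 1 hε.1)
    exact ⟨max M 1, by positivity, fun x => by linarith [hM x, le_max_left M 1]⟩
  · intro hgrowth s hs
    refine legendreTransform_lt_top_of_growth_bound (fun x t ht => (hFP x).2 ⟨t, ht, rfl⟩)
      (fun ε hε => ?_) hs
    obtain ⟨M, -, hM⟩ := hgrowth ε hε
    exact ⟨M, hM⟩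

/-- Let `P ⊂ ℝⁿ` be compact convex with `0 ∈ int P` and support function
`F_P`. Let `F : ℝⁿ → ℝ` be convex with Legendre transform `G`, with `F ≤ F_P + C`.
Then `G < +∞` on `int P` if and only if for every `ε ∈ (0,1)` there is `M_ε > 0` with
`F ≥ (1 - ε) F_P - M_ε` on `ℝⁿ`. -/
theorem legendre_finite_interior_iff_growth
    (n : ℕ) (P : Set (EuclideanSpace ℝ (Fin n)))
    (hPc : IsCompact P) (hPconv : Convex ℝ P)
    (h0 : (0 : EuclideanSpace ℝ (Fin n)) ∈ interior P)
    (FP : EuclideanSpace ℝ (Fin n) → ℝ)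
    (hFP : ∀ x, IsGreatest ((fun s => ⟪x, s⟫) '' P) (FP x))
    (F : EuclideanSpace ℝ (Fin n) → ℝ) (hF : ConvexOn ℝ Set.univ F)
    (G : EuclideanSpace ℝ (Fin n) → EReal)
    (hG : ∀ s, G s = ⨆ x, ((⟪x, s⟫ - F x : ℝ) : EReal))
    (C : ℝ) (hFC : ∀ x, F x ≤ FP x + C) :
    (∀ s ∈ interior P, G s < ⊤) ↔
      (∀ ε ∈ Set.Ioo (0:ℝ) 1, ∃ M > (0:ℝ), ∀ x, (1 - ε) * FP x - M ≤ F x) :=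
  legendre_finite_interior_iff_growth_general n P hPc hPconv h0 FP hFP F G hG
end

section
/- Let P be a compact convex body in ℝⁿ with nonempty interior and let G : P → ℝ ∪ {+∞} be a lower semicontinuous convex function which is finite at some point of P and such that |G| is Lebesgue integrable on P. Then |inf_P G| ≤ (1 / ((2^{1/(n+1)} − 1) · vol(P))) · ∫_P |G(s)| ds, where vol(P) is the Lebesgue measure of P. -/
/-
If `G` attains its minimum `-m < 0` at `x₀`, convexity gives `G ≤ -(1 - λ) m + λ G ∘ h⁻¹` on the
homothetic copy `h(P)`, `h = homothety x₀ λ`, whose volume is `λⁿ vol P`. Splitting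
`∫_P |G| ≥ -∫_{h(P)} G + ∫_{P \ h(P)} G` and changing variables yields
`∫_P |G| ≥ (1 - 2λⁿ⁺¹) ∫_P G + 2λⁿ(1 - λ) m vol P`; the choice `2λⁿ⁺¹ = 1` removes `∫_P G` and
leaves the constant `2λⁿ(1 - λ) = 2^{1/(n+1)} - 1`. If the minimum is nonnegative the bound is
immediate. Measure-theoretically `G` is replaced by the real function `G.toReal` on the convex
set `P ∩ {G < ⊤}`, which has full measure in `P` because `∫_P |G| < ⊤`.
-/

open MeasureTheory Set Module AffineMap

section Homothety

variable {E F : Type*} [NormedAddCommGroup E] [NormedSpace ℝ E]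
  [NormedAddCommGroup F] [NormedSpace ℝ F]

theorem ContinuousLinearMap.det_smul_id [FiniteDimensional ℝ E] (r : ℝ) :
    (r • ContinuousLinearMap.id ℝ E).det = r ^ finrank ℝ E := by
  simp [ContinuousLinearMap.det, LinearMap.det_smul]

theorem hasFDerivAt_homothety (c : E) (r : ℝ) (x : E) :
    HasFDerivAt (homothety c r) (r • ContinuousLinearMap.id ℝ E) x := by
  simp only [funext (homothety_apply c r), vsub_eq_sub, vadd_eq_add]
  exact (((hasFDerivAt_id x).sub_const c).const_smul r).add_const c

variable [FiniteDimensional ℝ E] [MeasurableSpace E] [BorelSpace E] {s : Set E} (c : E) {r : ℝ}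

theorem MeasurableSet.image_homothety (hs : MeasurableSet s) (hr : r ≠ 0) :
    MeasurableSet (homothety c r '' s) :=
  measurable_image_of_fderivWithin hs (fun x _ ↦ (hasFDerivAt_homothety c r x).hasFDerivWithinAt)
    (homothety_injective c hr).injOn

variable (μ : Measure E) [μ.IsAddHaarMeasure]

theorem setIntegral_image_homothety (hs : MeasurableSet s) (hr : r ≠ 0) (f : E → F) :
    ∫ x in homothety c r '' s, f x ∂μ = |r| ^ finrank ℝ E • ∫ x in s, f (homothety c r x) ∂μ := by
  rw [integral_image_eq_integral_abs_det_fderiv_smul μ hs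
    (fun x _ ↦ (hasFDerivAt_homothety c r x).hasFDerivWithinAt)
    (homothety_injective c hr).injOn, integral_smul]
  simp only [ContinuousLinearMap.det_smul_id, abs_pow]

theorem IntegrableOn.comp_homothety (hs : MeasurableSet s) (hr : r ≠ 0) {f : E → F}
    (hf : IntegrableOn f (homothety c r '' s) μ) :
    IntegrableOn (fun x ↦ f (homothety c r x)) s μ := by
  rw [integrableOn_image_iff_integrableOn_abs_det_fderiv_smul μ hs
    (fun x _ ↦ (hasFDerivAt_homothety c r x).hasFDerivWithinAt)
    (homothety_injective c hr).injOn] at hf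
  simp only [ContinuousLinearMap.det_smul_id, abs_pow] at hf
  exact (integrable_smul_iff (by positivity) _).1 hf

end Homothety

theorem setIntegral_sub_two_mul_setIntegral_le_setIntegral_abs {α : Type*} [MeasurableSpace α]
    {μ : Measure α} {s t : Set α} {f : α → ℝ} (ht : MeasurableSet t) (hts : t ⊆ s)
    (hf : IntegrableOn f s μ) :
    ∫ x in s, f x ∂μ - 2 * ∫ x in t, f x ∂μ ≤ ∫ x in s, |f x| ∂μ := by
  have hsplit := integral_inter_add_sdiff ht hf
  have hsplit_abs := integral_inter_add_sdiff ht hf.abs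
  rw [inter_eq_right.2 hts] at hsplit hsplit_abs
  have hft := hf.mono_set hts
  have hfd := hf.mono_set (sdiff_subset (t := t))
  have hneg : -∫ x in t, f x ∂μ ≤ ∫ x in t, |f x| ∂μ := by
    rw [← integral_neg]
    exact integral_mono hft.neg hft.abs fun x ↦ neg_le_abs (f x)
  have hpos : ∫ x in s \ t, f x ∂μ ≤ ∫ x in s \ t, |f x| ∂μ :=
    integral_mono hfd hfd.abs fun x ↦ le_abs_self (f x)
  linarith

section ConvexOn

variable {E : Type*} [NormedAddCommGroup E] [NormedSpace ℝ E] [FiniteDimensional ℝ E]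
  [MeasurableSpace E] [BorelSpace E] {μ : Measure E} [μ.IsAddHaarMeasure]
  {D : Set E} {g : E → ℝ} {x₀ : E}

theorem ConvexOn.sub_le_setIntegral_abs (hg : ConvexOn ℝ D g) (hD : MeasurableSet D)
    (hμD : μ D ≠ ⊤) (hgi : IntegrableOn g D μ) (hx₀ : x₀ ∈ D) {l : ℝ} (hl0 : 0 < l)
    (hl1 : l ≤ 1) :
    (1 - 2 * l ^ (finrank ℝ E + 1)) * ∫ x in D, g x ∂μ
        - 2 * l ^ finrank ℝ E * (1 - l) * μ.real D * g x₀ ≤ ∫ x in D, |g x| ∂μ := by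
  have hsub : homothety x₀ l '' D ⊆ D := by
    rintro _ ⟨x, hx, rfl⟩
    exact hg.1.lineMap_mem hx₀ hx ⟨hl0.le, hl1⟩
  have hcomp : IntegrableOn (fun x ↦ g (homothety x₀ l x)) D μ :=
    IntegrableOn.comp_homothety x₀ μ hD hl0.ne' (hgi.mono_set hsub)
  have hconst : IntegrableOn (fun _ ↦ (1 - l) * g x₀) D μ := integrableOn_const hμD
  have hbound : ∫ x in D, g (homothety x₀ l x) ∂μ ≤
      (1 - l) * g x₀ * μ.real D + l * ∫ x in D, g x ∂μ := by
    calc ∫ x in D, g (homothety x₀ l x) ∂μ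
        ≤ ∫ x in D, ((1 - l) * g x₀ + l * g x) ∂μ := by
          refine setIntegral_mono_on hcomp (hconst.add (hgi.const_mul l)) hD fun x hx ↦ ?_
          have h := hg.2 hx₀ hx (sub_nonneg.2 hl1) hl0.le (sub_add_cancel 1 l)
          have hx : homothety x₀ l x = (1 - l) • x₀ + l • x := by
            rw [homothety_apply, vsub_eq_sub, vadd_eq_add]
            module
          simpa only [hx, smul_eq_mul] using h
      _ = (1 - l) * g x₀ * μ.real D + l * ∫ x in D, g x ∂μ := by
          rw [integral_add hconst (hgi.const_mul l), setIntegral_const, integral_const_mul,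
            smul_eq_mul, mul_comm (μ.real D)]
  have hsplit := setIntegral_sub_two_mul_setIntegral_le_setIntegral_abs
    (hD.image_homothety x₀ hl0.ne') hsub hgi
  rw [setIntegral_image_homothety x₀ μ hD hl0.ne', abs_of_pos hl0, smul_eq_mul] at hsplit
  have := mul_le_mul_of_nonneg_left hbound (pow_nonneg hl0.le (finrank ℝ E))
  rw [pow_succ]
  linear_combination hsplit + 2 * this

theorem ConvexOn.neg_mul_le_setIntegral_abs (hg : ConvexOn ℝ D g) (hD : MeasurableSet D)
    (hμD : μ D ≠ ⊤) (hgi : IntegrableOn g D μ) (hx₀ : x₀ ∈ D) :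
    ((2 : ℝ) ^ ((finrank ℝ E : ℝ) + 1)⁻¹ - 1) * μ.real D * -g x₀ ≤ ∫ x in D, |g x| ∂μ := by
  set d := finrank ℝ E
  set r := (2 : ℝ) ^ ((d : ℝ) + 1)⁻¹
  have hr : r ^ (d + 1) = 2 := by
    have := Real.rpow_inv_natCast_pow (x := 2) (n := d + 1) zero_le_two d.succ_ne_zero
    simpa [r] using this
  have hr1 : 1 ≤ r := Real.one_le_rpow one_le_two (by positivity)
  have hr0 : 0 < r := zero_lt_one.trans_le hr1
  have h := hg.sub_le_setIntegral_abs hD hμD hgi hx₀ (inv_pos.2 hr0) (inv_le_one_of_one_le₀ hr1)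
  have hcancel : 1 - 2 * r⁻¹ ^ (d + 1) = 0 := by rw [inv_pow, hr]; norm_num
  have hcoef : 2 * r⁻¹ ^ d * (1 - r⁻¹) = r - 1 := by
    rw [← hr, pow_succ, inv_pow]
    field_simp
  rw [hcancel, zero_mul, zero_sub, hcoef] at h
  linarith

theorem ConvexOn.mul_abs_le_setIntegral_abs_of_isMinOn (hg : ConvexOn ℝ D g)
    (hD : MeasurableSet D) (hμD : μ D ≠ ⊤) (hgi : IntegrableOn g D μ) (hx₀ : x₀ ∈ D)
    (hmin : IsMinOn g D x₀) :
    ((2 : ℝ) ^ ((finrank ℝ E : ℝ) + 1)⁻¹ - 1) * μ.real D * |g x₀| ≤ ∫ x in D, |g x| ∂μ := by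
  rcases lt_or_ge (g x₀) 0 with hneg | hnonneg
  · rw [abs_of_neg hneg]
    exact hg.neg_mul_le_setIntegral_abs hD hμD hgi hx₀
  · have hc : (2 : ℝ) ^ ((finrank ℝ E : ℝ) + 1)⁻¹ ≤ 2 :=
      Real.rpow_le_self_of_one_le one_le_two (inv_le_one_of_one_le₀ (by simp))
    have hV : |g x₀| * μ.real D ≤ ∫ x in D, |g x| ∂μ :=
      setIntegral_ge_of_const_le_real hD hμD (fun x hx ↦ abs_le_abs_of_nonneg hnonneg (hmin hx))
        hgi.abs
    linear_combination hV + mul_nonneg (sub_nonneg.2 hc)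
      (mul_nonneg measureReal_nonneg (abs_nonneg (g x₀)))

end ConvexOn

theorem LowerSemicontinuousOn.aemeasurable {α β : Type*} [TopologicalSpace α] [MeasurableSpace α]
    [OpensMeasurableSpace α] [TopologicalSpace β] [MeasurableSpace β] [BorelSpace β]
    [LinearOrder β] [OrderTopology β] [SecondCountableTopology β] {f : α → β} {s : Set α}
    {μ : Measure α} (hf : LowerSemicontinuousOn f s) (hs : MeasurableSet s) :
    AEMeasurable f (μ.restrict s) :=
  (aemeasurable_restrict_iff_comap_subtype hs).2
    (lowerSemicontinuous_restrict_iff.2 hf).measurable.aemeasurable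

theorem LowerSemicontinuousOn.measurableSet_sdiff_preimage {α β : Type*} [TopologicalSpace α]
    [MeasurableSpace α] [OpensMeasurableSpace α] [TopologicalSpace β] [MeasurableSpace β]
    [BorelSpace β] [LinearOrder β] [OrderTopology β] [SecondCountableTopology β]
    {f : α → β} {s : Set α} (hf : LowerSemicontinuousOn f s) (hs : MeasurableSet s) {t : Set β}
    (ht : MeasurableSet t) : MeasurableSet (s \ f ⁻¹' t) := by
  have h := hs.subtype_image ((lowerSemicontinuous_restrict_iff.2 hf).measurable ht.compl)
  rwa [domRestrict_eq, preimage_comp, Subtype.image_preimage_coe, preimage_compl, ← sdiff_eq] at h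

theorem EReal.enorm_toReal_le_abs (x : EReal) : ‖x.toReal‖ₑ ≤ x.abs := by
  induction x <;> simp [EReal.abs_def, Real.enorm_eq_ofReal_abs]

section EReal

variable {α : Type*} [MeasurableSpace α] {μ : Measure α} {f : α → EReal}

theorem integrable_toReal_of_lintegral_abs_ne_top (hf : AEMeasurable f μ)
    (h : ∫⁻ x, (f x).abs ∂μ ≠ ⊤) : Integrable (fun x ↦ (f x).toReal) μ :=
  ⟨hf.ereal_toReal.aestronglyMeasurable,
    (lintegral_mono fun x ↦ (f x).enorm_toReal_le_abs).trans_lt h.lt_top⟩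

theorem ofReal_integral_abs_toReal_le_lintegral_abs (hf : Integrable (fun x ↦ (f x).toReal) μ) :
    ENNReal.ofReal (∫ x, |(f x).toReal| ∂μ) ≤ ∫⁻ x, (f x).abs ∂μ := by
  simp only [← Real.norm_eq_abs]
  rw [ofReal_integral_norm_eq_lintegral_enorm hf]
  exact lintegral_mono fun x ↦ (f x).enorm_toReal_le_abs

theorem measure_sdiff_preimage_top {s : Set α} (hs : MeasurableSet s)
    (hD : MeasurableSet (s \ f ⁻¹' {⊤})) (h : ∫⁻ x in s, (f x).abs ∂μ ≠ ⊤) :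
    μ (s \ f ⁻¹' {⊤}) = μ s := by
  have hT : MeasurableSet (s ∩ f ⁻¹' {⊤}) := by
    simpa [sdiff_sdiff_right_self] using hs.diff hD
  refine measure_sdiff_null' (by_contra fun hpos ↦ h (eq_top_iff.2 ?_))
  calc ⊤ = ∫⁻ x in s ∩ f ⁻¹' {⊤}, (f x).abs ∂μ := by
        rw [setLIntegral_congr_fun hT fun x hx ↦ by rw [hx.2, EReal.abs_top],
          setLIntegral_const, ENNReal.top_mul hpos]
    _ ≤ ∫⁻ x in s, (f x).abs ∂μ := lintegral_mono_set inter_subset_left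

end EReal

theorem convexOn_toReal_sdiff_preimage_top {E : Type*} [AddCommGroup E] [Module ℝ E]
    {s : Set E} {G : E → EReal} (hs : Convex ℝ s) (hbot : ∀ x ∈ s, G x ≠ ⊥)
    (hG : ∀ x ∈ s, ∀ y ∈ s, ∀ a b : ℝ, 0 ≤ a → 0 ≤ b → a + b = 1 →
      G (a • x + b • y) ≤ (a : EReal) * G x + (b : EReal) * G y) :
    ConvexOn ℝ (s \ G ⁻¹' {⊤}) (fun x ↦ (G x).toReal) := by
  set D := s \ G ⁻¹' {⊤}
  have hcoe : ∀ x ∈ D, G x = ((G x).toReal : EReal) :=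
    fun x hx ↦ (EReal.coe_toReal hx.2 (hbot x hx.1)).symm
  have hcomb : ∀ ⦃x⦄, x ∈ D → ∀ ⦃y⦄, y ∈ D → ∀ ⦃a b : ℝ⦄, 0 ≤ a → 0 ≤ b → a + b = 1 →
      G (a • x + b • y) ≤ ((a * (G x).toReal + b * (G y).toReal : ℝ) : EReal) := by
    intro x hx y hy a b ha hb hab
    rw [EReal.coe_add, EReal.coe_mul, EReal.coe_mul, ← hcoe x hx, ← hcoe y hy]
    exact hG x hx.1 y hy.1 a b ha hb hab
  have hD : Convex ℝ D := fun x hx y hy a b ha hb hab ↦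
    ⟨hs hx.1 hy.1 ha hb hab, ((hcomb hx hy ha hb hab).trans_lt (EReal.coe_lt_top _)).ne⟩
  refine ⟨hD, fun x hx y hy a b ha hb hab ↦ ?_⟩
  have h := EReal.toReal_le_toReal (hcomb hx hy ha hb hab)
    (hbot _ (hD hx hy ha hb hab).1) (EReal.coe_ne_top _)
  rwa [EReal.toReal_coe] at h

theorem ENNReal.ofReal_le_inv_mul_of_ofReal_mul_le {a c : ℝ} {V J : ENNReal} (hc : 0 < c)
    (hV0 : V ≠ 0) (hV : V ≠ ⊤) (h : ENNReal.ofReal (c * V.toReal * a) ≤ J) :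
    ENNReal.ofReal a ≤ (ENNReal.ofReal c * V)⁻¹ * J := by
  rwa [← ENNReal.mul_le_iff_le_inv (mul_ne_zero (ENNReal.ofReal_pos.2 hc).ne' hV0)
    (ENNReal.mul_ne_top ENNReal.ofReal_ne_top hV), ← ENNReal.ofReal_toReal hV,
    ← ENNReal.ofReal_mul hc.le, ← ENNReal.ofReal_mul (by positivity)]

/-- Let `P` be a compact convex body in `ℝⁿ` with nonempty interior and let
`G : P → ℝ ∪ {+∞}` be a lower semicontinuous convex function, finite at some point of `P`,
with `|G|` Lebesgue integrable on `P`. Then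
`|inf_P G| ≤ (1 / ((2^{1/(n+1)} - 1) vol(P))) ∫_P |G| dV`. -/
theorem inf_bound_by_L1_norm
    (n : ℕ) (P : Set (EuclideanSpace ℝ (Fin n)))
    (hPc : IsCompact P) (hPconv : Convex ℝ P) (hPint : (interior P).Nonempty)
    (G : EuclideanSpace ℝ (Fin n) → EReal)
    (hGbot : ∀ s, G s ≠ ⊥)
    (hlsc : LowerSemicontinuousOn G P)
    (hconv : ∀ s ∈ P, ∀ t ∈ P, ∀ a b : ℝ, 0 ≤ a → 0 ≤ b → a + b = 1 →
      G (a • s + b • t) ≤ (a : EReal) * G s + (b : EReal) * G t)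
    (hfin : ∃ s ∈ P, G s ≠ ⊤)
    (hint : ∫⁻ s in P, (G s).abs ∂volume ≠ ⊤) :
    (sInf (G '' P)).abs ≤
      (ENNReal.ofReal ((2:ℝ) ^ (((n:ℝ) + 1))⁻¹ - 1) * volume P)⁻¹ *
        ∫⁻ s in P, (G s).abs ∂volume := by
  obtain ⟨x₀, hx₀P, hmin⟩ := hlsc.exists_isMinOn (hPint.mono interior_subset) hPc
  obtain ⟨s, hsP, hs⟩ := hfin
  have hx₀top : G x₀ ≠ ⊤ := ne_top_of_le_ne_top hs (hmin hsP)
  set D := P \ G ⁻¹' {⊤}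
  have hPm : MeasurableSet P := hPc.isClosed.measurableSet
  have hDm : MeasurableSet D := hlsc.measurableSet_sdiff_preimage hPm (measurableSet_singleton ⊤)
  have hvolD : volume D = volume P := measure_sdiff_preimage_top hPm hDm hint
  have hgi : IntegrableOn (fun x ↦ (G x).toReal) D :=
    integrable_toReal_of_lintegral_abs_ne_top ((hlsc.mono sdiff_subset).aemeasurable hDm)
      (ne_top_of_le_ne_top hint (lintegral_mono_set sdiff_subset))
  have hreal := (convexOn_toReal_sdiff_preimage_top hPconv (fun x _ ↦ hGbot x) hconv)
    |>.mul_abs_le_setIntegral_abs_of_isMinOn hDm (hvolD ▸ hPc.measure_lt_top.ne) hgi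
      ⟨hx₀P, hx₀top⟩ fun x hx ↦ EReal.toReal_le_toReal (hmin hx.1) (hGbot x₀) hx.2
  rw [finrank_euclideanSpace_fin, measureReal_def, hvolD] at hreal
  have hL1 := (ofReal_integral_abs_toReal_le_lintegral_abs hgi).trans
    (lintegral_mono_set (μ := volume) (f := fun x ↦ (G x).abs) sdiff_subset)
  rw [sInf_image', hmin.iInf_eq hx₀P, ← EReal.coe_toReal hx₀top (hGbot x₀), EReal.abs_def]
  exact ENNReal.ofReal_le_inv_mul_of_ofReal_mul_le
    (sub_pos.2 (Real.one_lt_rpow one_lt_two (by positivity)))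
    (Measure.measure_pos_of_nonempty_interior _ hPint).ne' hPc.measure_lt_top.ne
    ((ENNReal.ofReal_le_ofReal hreal).trans hL1)
end

section
/- Let n ≥ 1 be an integer and let 0 < a ≤ b be real numbers. Then n·b^{n+1}/a − (n+1)·bⁿ + 2·aⁿ ≥ (n+1)·(2^{1/(n+1)} − 1)·bⁿ, with equality when a = b·2^{−1/(n+1)}. -/
/-!
Weighted AM-GM with weights `n/(n+1)` and `1/(n+1)`, applied to `b^(n+1)/a` and `2aⁿ`, gives
`n b^(n+1)/a + 2aⁿ ≥ (n+1) 2^(1/(n+1)) bⁿ`, because the weighted geometric mean of these two terms,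
`(2 b^(n(n+1)))^(1/(n+1)) = 2^(1/(n+1)) bⁿ`, does not depend on `a`. Equality in AM-GM holds when
the two terms agree, i.e. when `2 a^(n+1) = b^(n+1)`, which is `a = b 2^(-1/(n+1))`.
-/

open Real

lemma geom_mean_pow_mul_le (n : ℕ) {x y : ℝ} (hx : 0 ≤ x) (hy : 0 ≤ y) :
    ((n : ℝ) + 1) * (x ^ n * y) ^ ((n : ℝ) + 1)⁻¹ ≤ n * x + y := by
  have hc : (0 : ℝ) < n + 1 := by positivity
  have hmean := geom_mean_le_arith_mean2_weighted (w₁ := n / ((n : ℝ) + 1))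
    (w₂ := ((n : ℝ) + 1)⁻¹) (by positivity) (by positivity) hx hy (by field_simp)
  rw [mul_rpow (pow_nonneg hx n) hy, ← rpow_natCast, ← rpow_mul hx, ← div_eq_mul_inv]
  calc ((n : ℝ) + 1) * (x ^ ((n : ℝ) / (n + 1)) * y ^ ((n : ℝ) + 1)⁻¹)
      ≤ (n + 1) * (n / (n + 1) * x + ((n : ℝ) + 1)⁻¹ * y) := by gcongr
    _ = n * x + y := by field_simp

lemma mul_pow_succ_rpow_inv (n : ℕ) {c x : ℝ} (hc : 0 ≤ c) (hx : 0 ≤ x) :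
    (c * x ^ (n + 1)) ^ ((n : ℝ) + 1)⁻¹ = c ^ ((n : ℝ) + 1)⁻¹ * x := by
  rw [mul_rpow hc (pow_nonneg hx _)]
  congr 1
  exact_mod_cast pow_rpow_inv_natCast hx n.succ_ne_zero

lemma two_mul_rpow_neg_inv_pow_succ (n : ℕ) :
    2 * ((2 : ℝ) ^ (-((n : ℝ) + 1)⁻¹)) ^ (n + 1) = 1 := by
  rw [← rpow_natCast, ← rpow_mul zero_le_two]
  push_cast
  rw [neg_mul, inv_mul_cancel₀ (by positivity), rpow_neg_one]
  norm_num

lemma eval_mul_of_two_mul_pow_succ_eq_one (n : ℕ) {b t : ℝ} (hb : b ≠ 0) (ht : t ≠ 0)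
    (h : 2 * t ^ (n + 1) = 1) :
    (n : ℝ) * b ^ (n + 1) / (b * t) - ((n : ℝ) + 1) * b ^ n + 2 * (b * t) ^ n =
      ((n : ℝ) + 1) * (t⁻¹ - 1) * b ^ n := by
  field_simp
  linear_combination b ^ (n + 1) * h

theorem elementary_inequality_f_general
    (n : ℕ) (a b : ℝ) (ha : 0 < a) (hab : a ≤ b) :
    ((n : ℝ) + 1) * ((2:ℝ) ^ (((n:ℝ) + 1))⁻¹ - 1) * b ^ n ≤
        (n : ℝ) * b ^ (n + 1) / a - ((n : ℝ) + 1) * b ^ n + 2 * a ^ n ∧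
      (a = b * (2:ℝ) ^ (-(((n:ℝ) + 1))⁻¹) →
        (n : ℝ) * b ^ (n + 1) / a - ((n : ℝ) + 1) * b ^ n + 2 * a ^ n =
          ((n : ℝ) + 1) * ((2:ℝ) ^ (((n:ℝ) + 1))⁻¹ - 1) * b ^ n) := by
  have hb : 0 < b := ha.trans_le hab
  refine ⟨?_, fun ha_eq => ?_⟩
  · have hprod : (b ^ (n + 1) / a) ^ n * (2 * a ^ n) = 2 * (b ^ n) ^ (n + 1) := by
      rw [div_pow]
      field_simp
      ring
    have hmean := geom_mean_pow_mul_le n (by positivity : 0 ≤ b ^ (n + 1) / a)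
      (by positivity : 0 ≤ 2 * a ^ n)
    rw [hprod, mul_pow_succ_rpow_inv n zero_le_two (by positivity)] at hmean
    rw [mul_div_assoc]
    linarith
  · rw [ha_eq, eval_mul_of_two_mul_pow_succ_eq_one n hb.ne' (by positivity)
      (two_mul_rpow_neg_inv_pow_succ n), rpow_neg zero_le_two, inv_inv]

/-- For an integer `n ≥ 1` and reals `0 < a ≤ b`,
`n b^{n+1}/a - (n+1) bⁿ + 2aⁿ ≥ (n+1)(2^{1/(n+1)} - 1) bⁿ`, with equality when
`a = b 2^{-1/(n+1)}`. -/
theorem elementary_inequality_f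
    (n : ℕ) (hn : 1 ≤ n) (a b : ℝ) (ha : 0 < a) (hab : a ≤ b) :
    ((n : ℝ) + 1) * ((2:ℝ) ^ (((n:ℝ) + 1))⁻¹ - 1) * b ^ n ≤
        (n : ℝ) * b ^ (n + 1) / a - ((n : ℝ) + 1) * b ^ n + 2 * a ^ n ∧
      (a = b * (2:ℝ) ^ (-(((n:ℝ) + 1))⁻¹) →
        (n : ℝ) * b ^ (n + 1) / a - ((n : ℝ) + 1) * b ^ n + 2 * a ^ n =
          ((n : ℝ) + 1) * ((2:ℝ) ^ (((n:ℝ) + 1))⁻¹ - 1) * b ^ n) :=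
  elementary_inequality_f_general n a b ha hab
end

section
/- Let q ∈ (0, 1) and let G : [0, 1] → ℝ be a continuous convex function with G ≥ 0 and min_{[0,1]} G = 0. Then ∫₀¹ G(s)^{q/(1−q)} ds ≤ (∫₀¹ |G′(s)|^q ds)^{1/(1−q)}, where G′ denotes the derivative of G, which exists at Lebesgue-almost every s ∈ (0, 1), and the right-hand side may equal +∞. -/
/-!
On the side of a zero `a` where `G` increases, `G'` is nonnegative and grows away from `a`, so
`G s = ∫ₐˢ G' ≤ G'(s) ^ (1 - q) * ∫ₐˢ |G'| ^ q`. Raising this to the power `p = q / (1 - q)` gives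
`G(s) ^ p ≤ |G'(s)| ^ q * I ^ p` with `I = ∫ |G'| ^ q`, and integrating in `s` yields
`I ^ (1 + p) = I ^ (1 / (1 - q))`. The side where `G` decreases follows by reflection, and the two
halves combine because `x ↦ x ^ (1 / (1 - q))` is superadditive.
-/

open MeasureTheory Set
open scoped ENNReal

theorem Real.le_rpow_one_sub_mul_rpow {x y q : ℝ} (hx : 0 ≤ x) (hxy : x ≤ y) (hq : q ≤ 1) :
    x ≤ y ^ (1 - q) * x ^ q := by
  rcases hx.eq_or_lt with rfl | hx
  · exact mul_nonneg (Real.rpow_nonneg hxy _) (Real.rpow_nonneg le_rfl _)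
  calc x = x ^ (1 - q) * x ^ q := by rw [← Real.rpow_add hx, sub_add_cancel, Real.rpow_one]
    _ ≤ y ^ (1 - q) * x ^ q := by gcongr

theorem lintegral_Icc_eq_add {f : ℝ → ℝ≥0∞} {a b c : ℝ} (hab : a ≤ b) (hbc : b ≤ c) :
    ∫⁻ x in Icc a c, f x = (∫⁻ x in Icc a b, f x) + ∫⁻ x in Icc b c, f x := by
  rw [← Icc_union_Ioc_eq_Icc hab hbc, lintegral_union measurableSet_Ioc,
    setLIntegral_congr Ioc_ae_eq_Icc]
  exact disjoint_left.2 fun _ hx hx' => hx'.1.not_ge hx.2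

theorem lintegral_Icc_comp_neg (f : ℝ → ℝ≥0∞) (a b : ℝ) :
    ∫⁻ x in Icc (-b) (-a), f (-x) = ∫⁻ x in Icc a b, f x := by
  rw [← neg_Icc, ← neg_preimage]
  exact (Measure.measurePreserving_neg volume).setLIntegral_comp_preimage_emb
    measurableEmbedding_neg f _

theorem MonotoneOn.ae_restrict_differentiableAt {G : ℝ → ℝ} {a b : ℝ}
    (hmono : MonotoneOn G (Icc a b)) :
    ∀ᵐ t ∂volume.restrict (Icc a b), DifferentiableAt ℝ G t := by
  rw [← Measure.restrict_congr_set Ioo_ae_eq_Icc, ae_restrict_iff' measurableSet_Ioo]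
  filter_upwards [hmono.ae_differentiableWithinAt_of_mem] with t hd ht
  exact (hd (Ioo_subset_Icc_self ht)).differentiableAt (Icc_mem_nhds ht.1 ht.2)

namespace ConvexOn

variable {G : ℝ → ℝ} {a b : ℝ}

theorem monotoneOn_of_isMinOn_left (hG : ConvexOn ℝ (Icc a b) G)
    (hmin : IsMinOn G (Icc a b) a) : MonotoneOn G (Icc a b) := by
  intro x hx y hy hxy
  have hxa : x ∈ segment ℝ a y := by rw [segment_eq_Icc (hx.1.trans hxy)]; exact ⟨hx.1, hxy⟩
  calc G x ≤ max (G a) (G y) :=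
        hG.le_max_of_mem_segment (left_mem_Icc.2 (hx.1.trans hx.2)) hy hxa
    _ = G y := max_eq_right (hmin hy)

theorem deriv_nonneg_of_isMinOn_left (hG : ConvexOn ℝ (Icc a b) G)
    (hmin : IsMinOn G (Icc a b) a) {t : ℝ} (ht : t ∈ Ioo a b) : 0 ≤ deriv G t := by
  rw [← derivWithin_of_mem_nhds (Icc_mem_nhds ht.1 ht.2)]
  exact (hG.monotoneOn_of_isMinOn_left hmin).derivWithin_nonneg

theorem deriv_le_deriv {S : Set ℝ} (hG : ConvexOn ℝ S G) {t s : ℝ} (ht : t ∈ S) (hs : s ∈ S)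
    (hts : t ≤ s) (hdt : DifferentiableAt ℝ G t) (hds : DifferentiableAt ℝ G s) :
    deriv G t ≤ deriv G s := by
  rcases hts.eq_or_lt with rfl | hts
  · rfl
  exact (hG.deriv_le_slope ht hs hts hdt).trans (hG.slope_le_deriv ht hs hts hds)

theorem integral_deriv_eq_sub (hG : ConvexOn ℝ (Icc a b) G) (hcont : ContinuousOn G (Icc a b))
    (hmono : MonotoneOn G (Icc a b)) (hab : a ≤ b) :
    ∫ t in a..b, deriv G t = G b - G a := by
  have hright : ∀ t ∈ Ioo a b, HasDerivWithinAt G (derivWithin G (Ioi t) t) (Ioi t) t :=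
    fun t ht => hG.hasDerivWithinAt_rightDeriv_of_mem_interior (by rwa [interior_Icc])
  have hae : deriv G =ᵐ[volume.restrict (uIoc a b)] fun t => derivWithin G (Ioi t) t := by
    rw [uIoc_of_le hab]
    filter_upwards [ae_restrict_of_ae_restrict_of_subset Ioc_subset_Icc_self
      hmono.ae_restrict_differentiableAt] with t hd
    exact (hd.derivWithin (uniqueDiffWithinAt_Ioi t)).symm
  have hint : IntervalIntegrable (deriv G) volume a b :=
    MonotoneOn.intervalIntegrable_deriv (by rwa [uIcc_of_le hab])
  rw [intervalIntegral.integral_congr_ae_restrict hae]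
  exact intervalIntegral.integral_eq_sub_of_hasDeriv_right_of_le hab hcont hright
    (hint.congr_ae hae)

theorem ofReal_sub_le_mul_lintegral_rpow_deriv (hG : ConvexOn ℝ (Icc a b) G)
    (hcont : ContinuousOn G (Icc a b)) (hmin : IsMinOn G (Icc a b) a) {q s : ℝ} (hq : q ≤ 1)
    (hs : s ∈ Ioo a b) (hds : DifferentiableAt ℝ G s) :
    ENNReal.ofReal (G s - G a) ≤
      ENNReal.ofReal (deriv G s ^ (1 - q)) *
        ∫⁻ t in Ioo a s, ENNReal.ofReal (|deriv G t| ^ q) := by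
  have hsub : Icc a s ⊆ Icc a b := Icc_subset_Icc_right hs.2.le
  have hmono := (hG.monotoneOn_of_isMinOn_left hmin).mono hsub
  have hderiv_bound :
      ∀ᵐ t ∂volume.restrict (Ioo a s), 0 ≤ deriv G t ∧ deriv G t ≤ deriv G s := by
    filter_upwards [ae_restrict_of_ae_restrict_of_subset Ioo_subset_Icc_self
      hmono.ae_restrict_differentiableAt, ae_restrict_mem measurableSet_Ioo] with t hdt ht
    have ht' : t ∈ Ioo a b := ⟨ht.1, ht.2.trans hs.2⟩
    exact ⟨hG.deriv_nonneg_of_isMinOn_left hmin ht',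
      hG.deriv_le_deriv (Ioo_subset_Icc_self ht') (Ioo_subset_Icc_self hs) ht.2.le hdt hds⟩
  have hint : IntegrableOn (deriv G) (Ioo a s) :=
    (intervalIntegrable_iff_integrableOn_Ioo_of_le hs.1.le).1
      (MonotoneOn.intervalIntegrable_deriv (by rwa [uIcc_of_le hs.1.le]))
  have hftc : G s - G a = ∫ t in Ioo a s, deriv G t := by
    rw [← (hG.subset hsub (convex_Icc a s)).integral_deriv_eq_sub (hcont.mono hsub) hmono hs.1.le,
      intervalIntegral.integral_of_le hs.1.le, integral_Ioc_eq_integral_Ioo]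
  calc ENNReal.ofReal (G s - G a) = ∫⁻ t in Ioo a s, ENNReal.ofReal (deriv G t) := by
        rw [hftc, ofReal_integral_eq_lintegral_ofReal hint (hderiv_bound.mono fun _ h => h.1)]
    _ ≤ ∫⁻ t in Ioo a s,
          ENNReal.ofReal (deriv G s ^ (1 - q)) * ENNReal.ofReal (|deriv G t| ^ q) := by
        refine lintegral_mono_ae (hderiv_bound.mono fun t ⟨h0, hle⟩ => ?_)
        rw [← ENNReal.ofReal_mul (Real.rpow_nonneg (h0.trans hle) _), abs_of_nonneg h0]
        exact ENNReal.ofReal_le_ofReal (Real.le_rpow_one_sub_mul_rpow h0 hle hq)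
    _ = _ := lintegral_const_mul' _ _ ENNReal.ofReal_ne_top

theorem lintegral_rpow_le_lintegral_deriv_rpow_of_left_eq_zero {q : ℝ} (hq : q ∈ Ioo 0 1)
    (hG : ConvexOn ℝ (Icc a b) G) (hcont : ContinuousOn G (Icc a b))
    (hnonneg : ∀ s ∈ Icc a b, 0 ≤ G s) (hGa : G a = 0) :
    ∫⁻ s in Icc a b, ENNReal.ofReal (G s ^ (q / (1 - q))) ≤
      (∫⁻ s in Icc a b, ENNReal.ofReal (|deriv G s| ^ q)) ^ (1 / (1 - q)) := by
  obtain ⟨hq0, hq1⟩ := hq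
  set p := q / (1 - q)
  set I := ∫⁻ s in Icc a b, ENNReal.ofReal (|deriv G s| ^ q)
  have hp : 0 ≤ p := div_nonneg hq0.le (by linarith)
  have hpq : (1 - q) * p = q := mul_div_cancel₀ q (by linarith)
  have hexp : 1 + p = 1 / (1 - q) := by
    simp only [p]
    field_simp
    ring
  have hmin : IsMinOn G (Icc a b) a := isMinOn_iff.2 fun s hs => hGa ▸ hnonneg s hs
  have hpoint : ∀ᵐ s ∂volume.restrict (Icc a b),
      ENNReal.ofReal (G s ^ p) ≤ ENNReal.ofReal (|deriv G s| ^ q) * I ^ p := by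
    rw [← Measure.restrict_congr_set Ioo_ae_eq_Icc]
    filter_upwards [ae_restrict_of_ae_restrict_of_subset Ioo_subset_Icc_self
      (hG.monotoneOn_of_isMinOn_left hmin).ae_restrict_differentiableAt,
      ae_restrict_mem measurableSet_Ioo] with s hds hs
    have hd0 : 0 ≤ deriv G s := hG.deriv_nonneg_of_isMinOn_left hmin hs
    have hGs : ENNReal.ofReal (G s) ≤ ENNReal.ofReal (deriv G s ^ (1 - q)) * I := by
      have hkey := hG.ofReal_sub_le_mul_lintegral_rpow_deriv hcont hmin hq1.le hs hds
      rw [hGa, sub_zero] at hkey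
      exact hkey.trans (by
        gcongr
        exact lintegral_mono_set (Ioo_subset_Icc_self.trans (Icc_subset_Icc_right hs.2.le)))
    calc ENNReal.ofReal (G s ^ p) = ENNReal.ofReal (G s) ^ p :=
          (ENNReal.ofReal_rpow_of_nonneg (hnonneg s (Ioo_subset_Icc_self hs)) hp).symm
      _ ≤ (ENNReal.ofReal (deriv G s ^ (1 - q)) * I) ^ p := ENNReal.rpow_le_rpow hGs hp
      _ = ENNReal.ofReal (|deriv G s| ^ q) * I ^ p := by
        rw [ENNReal.mul_rpow_of_nonneg _ _ hp,
          ENNReal.ofReal_rpow_of_nonneg (Real.rpow_nonneg hd0 _) hp, ← Real.rpow_mul hd0, hpq,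
          abs_of_nonneg hd0]
  calc ∫⁻ s in Icc a b, ENNReal.ofReal (G s ^ p)
      ≤ ∫⁻ s in Icc a b, ENNReal.ofReal (|deriv G s| ^ q) * I ^ p := lintegral_mono_ae hpoint
    _ = I ^ (1 : ℝ) * I ^ p := by rw [lintegral_mul_const _ (by fun_prop), ENNReal.rpow_one]
    _ = I ^ (1 / (1 - q)) := by
      rw [← ENNReal.rpow_add_of_nonneg _ _ zero_le_one hp, hexp]

theorem lintegral_rpow_le_lintegral_deriv_rpow_of_right_eq_zero {q : ℝ} (hq : q ∈ Ioo 0 1)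
    (hG : ConvexOn ℝ (Icc a b) G) (hcont : ContinuousOn G (Icc a b))
    (hnonneg : ∀ s ∈ Icc a b, 0 ≤ G s) (hGb : G b = 0) :
    ∫⁻ s in Icc a b, ENNReal.ofReal (G s ^ (q / (1 - q))) ≤
      (∫⁻ s in Icc a b, ENNReal.ofReal (|deriv G s| ^ q)) ^ (1 / (1 - q)) := by
  have hmaps : MapsTo Neg.neg (Icc (-b) (-a)) (Icc a b) := fun x hx => by
    rw [← neg_Icc] at hx; exact hx
  have hconv : ConvexOn ℝ (Icc (-b) (-a)) (fun x => G (-x)) := by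
    rw [← neg_Icc, ← neg_preimage]
    exact hG.comp_linearMap (-LinearMap.id)
  have hreflected := lintegral_rpow_le_lintegral_deriv_rpow_of_left_eq_zero hq hconv
    (hcont.comp continuous_neg.continuousOn hmaps) (fun s hs => hnonneg _ (hmaps hs))
    (by simpa using hGb)
  simp only [deriv_comp_neg, abs_neg] at hreflected
  rwa [lintegral_Icc_comp_neg (fun s => ENNReal.ofReal (G s ^ (q / (1 - q)))),
    lintegral_Icc_comp_neg (fun s => ENNReal.ofReal (|deriv G s| ^ q))] at hreflected

end ConvexOn

/-- Let `q ∈ (0,1)` and let `G : [0,1] → ℝ` be continuous convex with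
`G ≥ 0` and `min G = 0`. Then
`∫₀¹ G(s)^{q/(1-q)} ds ≤ (∫₀¹ |G'(s)|^q ds)^{1/(1-q)}` (the right-hand side may be `+∞`). -/
theorem convex_min_zero_power_integral_bound
    (q : ℝ) (hq : q ∈ Set.Ioo (0:ℝ) 1) (G : ℝ → ℝ)
    (hcont : ContinuousOn G (Set.Icc 0 1))
    (hconv : ConvexOn ℝ (Set.Icc 0 1) G)
    (hnonneg : ∀ s ∈ Set.Icc (0:ℝ) 1, 0 ≤ G s)
    (hmin : ∃ a ∈ Set.Icc (0:ℝ) 1, G a = 0) :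
    ∫⁻ s in Set.Icc (0:ℝ) 1, ENNReal.ofReal (G s ^ (q / (1 - q))) ≤
      (∫⁻ s in Set.Icc (0:ℝ) 1, ENNReal.ofReal (|deriv G s| ^ q)) ^ (1 / (1 - q)) := by
  obtain ⟨a, ha, hGa⟩ := hmin
  have hleft : Icc 0 a ⊆ Icc 0 1 := Icc_subset_Icc_right ha.2
  have hright : Icc a 1 ⊆ Icc 0 1 := Icc_subset_Icc_left ha.1
  have hexp : 1 ≤ 1 / (1 - q) := by rw [le_div_iff₀ (by linarith [hq.2])]; linarith [hq.1]
  have hL := ConvexOn.lintegral_rpow_le_lintegral_deriv_rpow_of_right_eq_zero hq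
    (hconv.subset hleft (convex_Icc 0 a)) (hcont.mono hleft)
    (fun s hs => hnonneg s (hleft hs)) hGa
  have hR := ConvexOn.lintegral_rpow_le_lintegral_deriv_rpow_of_left_eq_zero hq
    (hconv.subset hright (convex_Icc a 1)) (hcont.mono hright)
    (fun s hs => hnonneg s (hright hs)) hGa
  rw [lintegral_Icc_eq_add ha.1 ha.2, lintegral_Icc_eq_add ha.1 ha.2]
  exact (add_le_add hL hR).trans (ENNReal.add_rpow_le_rpow_add _ _ hexp)
end

section
/- Let q ∈ (0, 1/2) and let G : [0, 1] → ℝ be a continuous convex function with G ≥ 0. Then ∫₀¹ |G′(s)|^q ds ≤ (2(1 − q)/(1 − 2q)) · (∫₀¹ G(s) ds)^q, where G′ denotes the derivative of G, which exists at Lebesgue-almost every s ∈ (0, 1). -/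
/-!
Let `m` be a minimum point of `G` on `[0, 1]`, so that `G` is antitone on `[0, m]` and monotone
on `[m, 1]`. On `[m, 1]` the right derivative of `G` is nonnegative, and integrating it by parts
against the weight `1 - s` gives `∫ₘ¹ |G'(s)| (1 - s) ds ≤ ∫ₘ¹ (G - G(m)) ≤ ∫₀¹ G`; symmetrically
with the weight `s` on `[0, m]`. Hence `∫₀¹ |G'| w ≤ 2 ∫₀¹ G` for `w(s) = min(s, 1 - s)`.
Hölder's inequality with exponents `1/q` and `1/(1-q)`, applied to
`|G'|^q = (|G'| w)^q (w^(-q/(1-q)))^(1-q)`, then bounds `∫ |G'|^q` by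
`(2 ∫ G)^q (∫ w^(-q/(1-q)))^(1-q)`, and `∫ w^(-q/(1-q)) ≤ 2 (1-q)/(1-2q)` is finite exactly
because `q < 1/2`.
-/

open MeasureTheory Set intervalIntegral

theorem abs_deriv_le_abs_derivWithin_Ioi (f : ℝ → ℝ) (x : ℝ) :
    |deriv f x| ≤ |derivWithin f (Ioi x) x| := by
  by_cases hf : DifferentiableAt ℝ f x
  · rw [hf.derivWithin (uniqueDiffWithinAt_Ioi x)]
  · simp [deriv_zero_of_not_differentiableAt hf]

theorem setLIntegral_Icc_ofReal_le_intervalIntegral {g h : ℝ → ℝ} {a b : ℝ} (hab : a ≤ b)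
    (hint : IntervalIntegrable h volume a b) (hgh : ∀ x ∈ Ioo a b, g x ≤ h x)
    (hh : ∀ x ∈ Ioo a b, 0 ≤ h x) :
    ∫⁻ x in Icc a b, ENNReal.ofReal (g x) ≤ ENNReal.ofReal (∫ x in a..b, h x) := by
  rw [integral_of_le hab, integral_Ioc_eq_integral_Ioo,
    ofReal_integral_eq_lintegral_ofReal (hint.1.mono_set Ioo_subset_Ioc_self)
      ((ae_restrict_iff' measurableSet_Ioo).2 (ae_of_all _ hh)),
    setLIntegral_congr Ioo_ae_eq_Icc.symm]
  exact setLIntegral_mono_ae' measurableSet_Ioo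
    (ae_of_all _ fun x hx => ENNReal.ofReal_le_ofReal (hgh x hx))

section ConvexInterval

variable {f : ℝ → ℝ} {a b : ℝ}

theorem ConvexOn.monotoneOn_Icc_of_isMinOn {m : ℝ} (hf : ConvexOn ℝ (Icc a b) f)
    (hm : m ∈ Icc a b) (hmin : IsMinOn f (Icc a b) m) : MonotoneOn f (Icc m b) := by
  intro x hx y hy hxy
  have hy' : y ∈ Icc a b := ⟨hm.1.trans hy.1, hy.2⟩
  rcases hx.1.eq_or_lt with rfl | hmx
  · exact hmin hy'
  · exact hf.le_right_of_left_le'' hm hy' hmx hxy (hmin ⟨hm.1.trans hx.1, hx.2⟩)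

theorem ConvexOn.antitoneOn_Icc_of_isMinOn {m : ℝ} (hf : ConvexOn ℝ (Icc a b) f)
    (hm : m ∈ Icc a b) (hmin : IsMinOn f (Icc a b) m) : AntitoneOn f (Icc a m) := by
  intro x hx y hy hxy
  have hx' : x ∈ Icc a b := ⟨hx.1, hx.2.trans hm.2⟩
  rcases hy.2.eq_or_lt with rfl | hym
  · exact hmin hx'
  · exact hf.le_left_of_right_le'' hx' hm hxy hym (hmin ⟨hx.1.trans hxy, hy.2.trans hm.2⟩)

theorem ConvexOn.hasDerivWithinAt_rightDeriv_of_mem_Ioo (hf : ConvexOn ℝ (Icc a b) f)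
    {x : ℝ} (hx : x ∈ Ioo a b) : HasDerivWithinAt f (derivWithin f (Ioi x) x) (Ioi x) x :=
  hf.hasDerivWithinAt_rightDeriv_of_mem_interior (by rwa [interior_Icc])

/- The two-sided derivative of `f` exists only almost everywhere, while the right derivative
exists at every interior point, which is what the fundamental theorem of calculus needs. -/
theorem ConvexOn.integral_rightDeriv_mul_sub (hf : ConvexOn ℝ (Icc a b) f)
    (hcont : ContinuousOn f (Icc a b)) (hab : a ≤ b)
    (hint : IntervalIntegrable (fun x => derivWithin f (Ioi x) x) volume a b) (c : ℝ) :
    ∫ x in a..b, derivWithin f (Ioi x) x * (c - x) =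
      f b * (c - b) - f a * (c - a) + ∫ x in a..b, f x := by
  have hcont' : ContinuousOn f (uIcc a b) := by rwa [uIcc_of_le hab]
  have hweight : ContinuousOn (fun x : ℝ => c - x) (uIcc a b) := by fun_prop
  have hparts := integral_deriv_mul_eq_sub_of_hasDeriv_right hcont' hweight
    (fun x hx => hf.hasDerivWithinAt_rightDeriv_of_mem_Ioo
      (by rwa [min_eq_left hab, max_eq_right hab] at hx))
    (fun x _ => (hasDerivWithinAt_id x _).const_sub c) hint
    (intervalIntegrable_const (c := (-1 : ℝ)))
  rw [integral_add (hint.mul_continuousOn hweight) (hcont'.intervalIntegrable.mul_const _),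
    intervalIntegral.integral_mul_const] at hparts
  linarith

theorem ConvexOn.lintegral_abs_deriv_mul_le_of_monotoneOn (hf : ConvexOn ℝ (Icc a b) f)
    (hcont : ContinuousOn f (Icc a b)) (hmono : MonotoneOn f (Icc a b)) :
    ∫⁻ x in Icc a b, ENNReal.ofReal (|deriv f x| * (b - x)) ≤
      ENNReal.ofReal (∫ x in a..b, (f x - f a)) := by
  rcases lt_or_ge b a with hba | hab
  · simp [Icc_eq_empty_of_lt hba]
  have hrd : ∀ x ∈ Ioo a b, 0 ≤ derivWithin f (Ioi x) x := fun x hx =>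
    have hxi : x ∈ interior (Icc a b) := by rwa [interior_Icc]
    calc 0 ≤ slope f a x := hmono.slope_nonneg (left_mem_Icc.2 hab) (interior_subset hxi)
      _ ≤ derivWithin f (Iio x) x :=
        hf.slope_le_leftDeriv_of_mem_interior (left_mem_Icc.2 hab) hxi hx.1
      _ ≤ derivWithin f (Ioi x) x := hf.leftDeriv_le_rightDeriv_of_mem_interior hxi
  have hint : IntervalIntegrable (fun x => derivWithin f (Ioi x) x) volume a b :=
    (intervalIntegrable_iff_integrableOn_Ioc_of_le hab).2 <| integrableOn_deriv_right_of_nonneg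
      hcont (fun x hx => hf.hasDerivWithinAt_rightDeriv_of_mem_Ioo hx) hrd
  have hparts : ∫ x in a..b, (f x - f a) = ∫ x in a..b, derivWithin f (Ioi x) x * (b - x) := by
    rw [hf.integral_rightDeriv_mul_sub hcont hab hint b,
      integral_sub (hcont.intervalIntegrable_of_Icc hab) intervalIntegrable_const]
    simp only [intervalIntegral.integral_const, smul_eq_mul, sub_self, mul_zero, zero_sub]
    ring
  rw [hparts]
  refine setLIntegral_Icc_ofReal_le_intervalIntegral hab
    (hint.mul_continuousOn (by fun_prop)) (fun x hx => ?_)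
    (fun x hx => mul_nonneg (hrd x hx) (sub_nonneg.2 hx.2.le))
  have hderiv := abs_deriv_le_abs_derivWithin_Ioi f x
  rw [abs_of_nonneg (hrd x hx)] at hderiv
  exact mul_le_mul_of_nonneg_right hderiv (sub_nonneg.2 hx.2.le)

theorem ConvexOn.lintegral_abs_deriv_mul_le_of_antitoneOn (hf : ConvexOn ℝ (Icc a b) f)
    (hcont : ContinuousOn f (Icc a b)) (hanti : AntitoneOn f (Icc a b)) :
    ∫⁻ x in Icc a b, ENNReal.ofReal (|deriv f x| * (x - a)) ≤
      ENNReal.ofReal (∫ x in a..b, (f x - f b)) := by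
  rcases lt_or_ge b a with hba | hab
  · simp [Icc_eq_empty_of_lt hba]
  have hrd : ∀ x ∈ Ioo a b, derivWithin f (Ioi x) x ≤ 0 := fun x hx =>
    have hxi : x ∈ interior (Icc a b) := by rwa [interior_Icc]
    (hf.rightDeriv_le_slope_of_mem_interior hxi (right_mem_Icc.2 hab) hx.2).trans
      (hanti.slope_nonpos (interior_subset hxi) (right_mem_Icc.2 hab))
  have hint : IntervalIntegrable (fun x => derivWithin f (Ioi x) x) volume a b := by
    refine (intervalIntegrable_iff_integrableOn_Ioc_of_le hab).2 ?_
    simpa using (integrableOn_deriv_right_of_nonneg hcont.neg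
      (fun x hx => (hf.hasDerivWithinAt_rightDeriv_of_mem_Ioo hx).neg)
      (fun x hx => neg_nonneg.2 (hrd x hx))).neg
  have hparts : ∫ x in a..b, (f x - f b) = ∫ x in a..b, derivWithin f (Ioi x) x * (a - x) := by
    rw [hf.integral_rightDeriv_mul_sub hcont hab hint a,
      integral_sub (hcont.intervalIntegrable_of_Icc hab) intervalIntegrable_const]
    simp only [intervalIntegral.integral_const, smul_eq_mul, sub_self, mul_zero, sub_zero]
    ring
  rw [hparts]
  refine setLIntegral_Icc_ofReal_le_intervalIntegral hab
    (hint.mul_continuousOn (by fun_prop)) (fun x hx => ?_)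
    (fun x hx => mul_nonneg_of_nonpos_of_nonpos (hrd x hx) (sub_nonpos.2 hx.1.le))
  have hderiv := abs_deriv_le_abs_derivWithin_Ioi f x
  rw [abs_of_nonpos (hrd x hx)] at hderiv
  calc |deriv f x| * (x - a) ≤ -derivWithin f (Ioi x) x * (x - a) :=
        mul_le_mul_of_nonneg_right hderiv (sub_nonneg.2 hx.1.le)
    _ = derivWithin f (Ioi x) x * (a - x) := by ring

theorem ConvexOn.lintegral_abs_deriv_mul_min_le (hf : ConvexOn ℝ (Icc a b) f)
    (hcont : ContinuousOn f (Icc a b)) (hnonneg : ∀ x ∈ Icc a b, 0 ≤ f x) (hab : a ≤ b) :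
    ∫⁻ x in Icc a b, ENNReal.ofReal (|deriv f x| * min (x - a) (b - x)) ≤
      ENNReal.ofReal (2 * ∫ x in a..b, f x) := by
  obtain ⟨m, hm, hmin⟩ := isCompact_Icc.exists_isMinOn (nonempty_Icc.2 hab) hcont
  have hfint : IntervalIntegrable f volume a b := hcont.intervalIntegrable_of_Icc hab
  have hf0 : 0 ≤ ∫ x in a..b, f x := integral_nonneg hab hnonneg
  have hpiece : ∀ c d, a ≤ c → d ≤ b → c ≤ d →
      ∫ x in c..d, (f x - f m) ≤ ∫ x in a..b, f x := fun c d hac hdb hcd =>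
    have hfcd : IntervalIntegrable f volume c d :=
      (hcont.mono (Icc_subset_Icc hac hdb)).intervalIntegrable_of_Icc hcd
    calc ∫ x in c..d, (f x - f m) ≤ ∫ x in c..d, f x :=
          integral_mono_on hcd (hfcd.sub intervalIntegrable_const) hfcd
            (fun x _ => sub_le_self _ (hnonneg m hm))
      _ ≤ ∫ x in a..b, f x := integral_mono_interval hac hcd hdb
          ((ae_restrict_iff' measurableSet_Ioc).2
            (ae_of_all _ fun x hx => hnonneg x (Ioc_subset_Icc_self hx))) hfint
  have hleft := (hf.subset (Icc_subset_Icc_right hm.2) (convex_Icc _ _))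
    |>.lintegral_abs_deriv_mul_le_of_antitoneOn (hcont.mono (Icc_subset_Icc_right hm.2))
      (hf.antitoneOn_Icc_of_isMinOn hm hmin)
  have hright := (hf.subset (Icc_subset_Icc_left hm.1) (convex_Icc _ _))
    |>.lintegral_abs_deriv_mul_le_of_monotoneOn (hcont.mono (Icc_subset_Icc_left hm.1))
      (hf.monotoneOn_Icc_of_isMinOn hm hmin)
  calc ∫⁻ x in Icc a b, ENNReal.ofReal (|deriv f x| * min (x - a) (b - x))
      ≤ (∫⁻ x in Icc a m, ENNReal.ofReal (|deriv f x| * min (x - a) (b - x))) +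
          ∫⁻ x in Icc m b, ENNReal.ofReal (|deriv f x| * min (x - a) (b - x)) := by
        rw [← Icc_union_Icc_eq_Icc hm.1 hm.2]
        exact lintegral_union_le _ _ _
    _ ≤ ENNReal.ofReal (∫ x in a..m, (f x - f m)) +
          ENNReal.ofReal (∫ x in m..b, (f x - f m)) := by
        gcongr ?_ + ?_
        · refine le_trans (lintegral_mono fun x => ?_) hleft
          gcongr
          exact min_le_left _ _
        · refine le_trans (lintegral_mono fun x => ?_) hright
          gcongr
          exact min_le_right _ _
    _ ≤ ENNReal.ofReal (∫ x in a..b, f x) + ENNReal.ofReal (∫ x in a..b, f x) := by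
        gcongr
        · exact hpiece a m le_rfl hm.2 hm.1
        · exact hpiece m b hm.1 le_rfl hm.2
    _ = ENNReal.ofReal (2 * ∫ x in a..b, f x) := by
        rw [← ENNReal.ofReal_add hf0 hf0, two_mul]

end ConvexInterval

theorem lintegral_ofReal_rpow_le_weighted {α : Type*} [MeasurableSpace α] {μ : Measure α}
    {F w : α → ℝ} {q : ℝ} (hF : AEMeasurable F μ) (hw : AEMeasurable w μ)
    (hF0 : ∀ᵐ x ∂μ, 0 ≤ F x) (hw0 : ∀ᵐ x ∂μ, 0 < w x) (hq0 : 0 ≤ q) (hq1 : q < 1) :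
    ∫⁻ x, ENNReal.ofReal (F x ^ q) ∂μ ≤
      (∫⁻ x, ENNReal.ofReal (F x * w x) ∂μ) ^ q *
        (∫⁻ x, ENNReal.ofReal (w x ^ (-(q / (1 - q)))) ∂μ) ^ (1 - q) := by
  have h1q : 1 - q ≠ 0 := by linarith
  calc ∫⁻ x, ENNReal.ofReal (F x ^ q) ∂μ
      = ∫⁻ x, ENNReal.ofReal (F x * w x) ^ q *
          ENNReal.ofReal (w x ^ (-(q / (1 - q)))) ^ (1 - q) ∂μ := by
        refine lintegral_congr_ae ?_
        filter_upwards [hF0, hw0] with x hFx hwx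
        rw [ENNReal.ofReal_rpow_of_nonneg (by positivity) hq0,
          ENNReal.ofReal_rpow_of_nonneg (by positivity) (by linarith),
          ← ENNReal.ofReal_mul (by positivity), Real.mul_rpow hFx hwx.le,
          ← Real.rpow_mul hwx.le, mul_assoc, ← Real.rpow_add hwx,
          neg_mul, div_mul_cancel₀ _ h1q, add_neg_cancel, Real.rpow_zero, mul_one]
    _ ≤ _ := ENNReal.lintegral_mul_norm_pow_le (by fun_prop) (by fun_prop) hq0 (by linarith)
        (by ring)

theorem lintegral_min_rpow_neg_le {β : ℝ} (hβ : β < 1) :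
    ∫⁻ x in Icc (0:ℝ) 1, ENNReal.ofReal (min x (1 - x) ^ (-β)) ≤
      ENNReal.ofReal (2 / (1 - β)) := by
  have hint : IntervalIntegrable (fun x : ℝ => x ^ (-β)) volume 0 1 :=
    intervalIntegrable_rpow' (by linarith)
  have hint' : IntervalIntegrable (fun x : ℝ => (1 - x) ^ (-β)) volume 0 1 := by
    simpa using (hint.comp_sub_left 1).symm
  have hsum : ∫ x in (0:ℝ)..1, (x ^ (-β) + (1 - x) ^ (-β)) = 2 / (1 - β) := by
    rw [integral_add hint hint', integral_comp_sub_left (fun x => x ^ (-β)),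
      sub_self, sub_zero, integral_rpow (Or.inl (by linarith)),
      Real.zero_rpow (by linarith), Real.one_rpow]
    field_simp
    ring
  have h0 : ∀ x ∈ Ioo (0:ℝ) 1, 0 ≤ x ^ (-β) := fun x hx => Real.rpow_nonneg hx.1.le _
  have h1 : ∀ x ∈ Ioo (0:ℝ) 1, 0 ≤ (1 - x) ^ (-β) := fun x hx =>
    Real.rpow_nonneg (sub_nonneg.2 hx.2.le) _
  rw [← hsum]
  refine setLIntegral_Icc_ofReal_le_intervalIntegral zero_le_one (hint.add hint')
    (fun x hx => ?_) (fun x hx => add_nonneg (h0 x hx) (h1 x hx))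
  rcases min_choice x (1 - x) with h | h <;> rw [h] <;> linarith [h0 x hx, h1 x hx]

theorem rpow_mul_rpow_one_sub_le {c d x q : ℝ} (hc : 0 ≤ c) (hcd : c ≤ d) (hx : 0 ≤ x)
    (hq0 : 0 ≤ q) : (c * x) ^ q * d ^ (1 - q) ≤ d * x ^ q := by
  have hd : 0 ≤ d := hc.trans hcd
  calc (c * x) ^ q * d ^ (1 - q) ≤ (d ^ q * x ^ q) * d ^ (1 - q) := by
        rw [Real.mul_rpow hc hx]
        gcongr
    _ = d * x ^ q := by
        rw [mul_right_comm, ← Real.rpow_add' hd (by simp), add_sub_cancel, Real.rpow_one]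

/-- Let `q ∈ (0, 1/2)` and let `G : [0,1] → ℝ` be continuous convex with
`G ≥ 0`. Then `∫₀¹ |G'(s)|^q ds ≤ (2(1-q)/(1-2q)) (∫₀¹ G(s) ds)^q`. -/
theorem derivative_fractional_moment_bound
    (q : ℝ) (hq : q ∈ Set.Ioo (0:ℝ) (1/2)) (G : ℝ → ℝ)
    (hcont : ContinuousOn G (Set.Icc 0 1))
    (hconv : ConvexOn ℝ (Set.Icc 0 1) G)
    (hnonneg : ∀ s ∈ Set.Icc (0:ℝ) 1, 0 ≤ G s) :
    ∫⁻ s in Set.Icc (0:ℝ) 1, ENNReal.ofReal (|deriv G s| ^ q) ≤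
      ENNReal.ofReal
        (2 * (1 - q) / (1 - 2 * q) * (∫ s in Set.Icc (0:ℝ) 1, G s) ^ q) := by
  obtain ⟨hq0, hq2⟩ := hq
  set I := ∫ s in Icc (0:ℝ) 1, G s
  set C := 2 * (1 - q) / (1 - 2 * q)
  have hI : 0 ≤ I := setIntegral_nonneg measurableSet_Icc hnonneg
  have hC : 2 ≤ C := by rw [le_div_iff₀ (by linarith)]; linarith
  have hweighted : ∫⁻ s in Icc (0:ℝ) 1, ENNReal.ofReal (|deriv G s| * min s (1 - s)) ≤
      ENNReal.ofReal (2 * I) := by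
    simpa only [sub_zero, integral_of_le zero_le_one, ← integral_Icc_eq_integral_Ioc] using
      hconv.lintegral_abs_deriv_mul_min_le hcont hnonneg zero_le_one
  have hweight : ∫⁻ s in Icc (0:ℝ) 1, ENNReal.ofReal (min s (1 - s) ^ (-(q / (1 - q)))) ≤
      ENNReal.ofReal C := by
    have h1q : 1 - q ≠ 0 := by linarith
    have hC' : 2 / (1 - q / (1 - q)) = C := by
      rw [show 1 - q / (1 - q) = (1 - 2 * q) / (1 - q) by field_simp; ring, div_div_eq_mul_div]
    exact hC' ▸ lintegral_min_rpow_neg_le ((div_lt_one (by linarith)).2 (by linarith))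
  have hpos : ∀ᵐ s ∂volume.restrict (Icc (0:ℝ) 1), 0 < min s (1 - s) := by
    rw [← Measure.restrict_congr_set Ioo_ae_eq_Icc, ae_restrict_iff' measurableSet_Ioo]
    exact ae_of_all _ fun s hs => lt_min hs.1 (sub_pos.2 hs.2)
  calc ∫⁻ s in Icc (0:ℝ) 1, ENNReal.ofReal (|deriv G s| ^ q)
      ≤ (∫⁻ s in Icc (0:ℝ) 1, ENNReal.ofReal (|deriv G s| * min s (1 - s))) ^ q *
          (∫⁻ s in Icc (0:ℝ) 1, ENNReal.ofReal (min s (1 - s) ^ (-(q / (1 - q))))) ^ (1 - q) :=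
        lintegral_ofReal_rpow_le_weighted (by fun_prop) (by fun_prop)
          (ae_of_all _ fun _ => abs_nonneg _) hpos hq0.le (by linarith)
    _ ≤ ENNReal.ofReal (2 * I) ^ q * ENNReal.ofReal C ^ (1 - q) := by
        gcongr
        linarith
    _ = ENNReal.ofReal ((2 * I) ^ q * C ^ (1 - q)) := by
        rw [ENNReal.ofReal_rpow_of_nonneg (by positivity) hq0.le,
          ENNReal.ofReal_rpow_of_nonneg (by linarith) (by linarith),
          ← ENNReal.ofReal_mul (by positivity)]
    _ ≤ ENNReal.ofReal (C * I ^ q) :=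
        ENNReal.ofReal_le_ofReal (rpow_mul_rpow_one_sub_le zero_le_two hC hI hq0.le)
end

section
/- Let n ≥ 1 be an integer and for λ > 0 set I(λ) = ∫₀¹ (t^{n−1} + λ^{−1}) · log(1 + λ^{−1} t^{−(n−1)}) dt. Then for every real x with 0 < x ≤ 1/e, setting λ_x = (n + 3) · x · log(1/x), one has x · I(λ_x) < 1. -/
/-!
Write `b = λ⁻¹` and `m = n - 1`. For `t ∈ (0, 1]`, `log (1 + y) ≤ y` bounds the `t ^ m` part of the
integrand by `b`, while `log (1 + b t⁻ᵐ) ≤ log (1 + b) - m log t` and `∫₀¹ -log t = 1` bound the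
`b` part; hence `I(λ) ≤ b (m + 1 + log (1 + b))`. For `λ = λ_x` one has `b ≤ x⁻¹` and `x⁻¹ ≥ e > 2`,
so `log (1 + b) < log (x⁻²) = 2 log (1/x)`, and `m + 1 ≤ (m + 1) log (1/x)` since `log (1/x) ≥ 1`.
Altogether `x I(λ_x) < x b (n + 3) log (1/x) = 1`.
-/

open MeasureTheory Real Set

lemma mul_log_one_add_mul_inv_le {a b : ℝ} (ha : 0 < a) (hb : 0 ≤ b) :
    a * log (1 + b * a⁻¹) ≤ b := by
  have hlog : log (1 + b * a⁻¹) ≤ b * a⁻¹ := by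
    linarith [log_le_sub_one_of_pos (by positivity : 0 < 1 + b * a⁻¹)]
  calc a * log (1 + b * a⁻¹) ≤ a * (b * a⁻¹) := by gcongr
    _ = b := by field_simp

lemma integrableOn_log_Ioc_zero_one : IntegrableOn log (Ioc (0 : ℝ) 1) :=
  (intervalIntegrable_iff_integrableOn_Ioc_of_le zero_le_one).mp
    intervalIntegral.intervalIntegrable_log'

lemma setIntegral_log_Ioc_zero_one : ∫ t in Ioc (0 : ℝ) 1, log t = -1 := by
  rw [← intervalIntegral.integral_of_le zero_le_one, integral_log]
  simp

section Integrand

variable {m : ℕ} {b : ℝ}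

lemma add_mul_log_one_add_mul_inv_pow_nonneg (hb : 0 ≤ b) {t : ℝ} (ht : 0 < t) :
    0 ≤ (t ^ m + b) * log (1 + b * (t ^ m)⁻¹) := by
  have : 0 ≤ b * (t ^ m)⁻¹ := by positivity
  exact mul_nonneg (by positivity) (log_nonneg (by linarith))

lemma add_mul_log_one_add_mul_inv_pow_le (hb : 0 ≤ b) {t : ℝ} (ht : t ∈ Ioc 0 1) :
    (t ^ m + b) * log (1 + b * (t ^ m)⁻¹) ≤ b * (1 + log (1 + b)) - b * m * log t := by
  obtain ⟨ht0, ht1⟩ := ht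
  have ha : 0 < t ^ m := pow_pos ht0 m
  have hsplit : log (1 + b * (t ^ m)⁻¹) = log (t ^ m + b) - m * log t := by
    rw [← log_pow, ← log_div (by positivity) ha.ne']
    congr 1
    field_simp
  have hnum : log (t ^ m + b) ≤ log (1 + b) :=
    log_le_log (by positivity) (by linarith [pow_le_one₀ ht0.le ht1 (n := m)])
  have hpow := mul_log_one_add_mul_inv_le ha hb
  calc (t ^ m + b) * log (1 + b * (t ^ m)⁻¹)
      = t ^ m * log (1 + b * (t ^ m)⁻¹) + b * (log (t ^ m + b) - m * log t) := by
        rw [← hsplit]; ring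
    _ ≤ b + b * (log (1 + b) - m * log t) := by gcongr
    _ = b * (1 + log (1 + b)) - b * m * log t := by ring

theorem setIntegral_add_mul_log_one_add_mul_inv_pow_le (hb : 0 ≤ b) :
    ∫ t in Ioc (0 : ℝ) 1, (t ^ m + b) * log (1 + b * (t ^ m)⁻¹)
      ≤ b * (m + 1 + log (1 + b)) := by
  have hconst : IntegrableOn (fun _ ↦ b * (1 + log (1 + b))) (Ioc (0 : ℝ) 1) :=
    integrableOn_const measure_Ioc_lt_top.ne
  have hlog : IntegrableOn (fun t ↦ b * m * log t) (Ioc (0 : ℝ) 1) :=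
    integrableOn_log_Ioc_zero_one.const_mul (b * m)
  calc ∫ t in Ioc (0 : ℝ) 1, (t ^ m + b) * log (1 + b * (t ^ m)⁻¹)
      ≤ ∫ t in Ioc (0 : ℝ) 1, (b * (1 + log (1 + b)) - b * m * log t) := by
        refine integral_mono_of_nonneg ?_ (hconst.sub hlog) ?_ <;>
          filter_upwards [ae_restrict_mem measurableSet_Ioc] with t ht
        exacts [add_mul_log_one_add_mul_inv_pow_nonneg hb ht.1,
          add_mul_log_one_add_mul_inv_pow_le hb ht]
    _ = b * (m + 1 + log (1 + b)) := by
        rw [integral_sub hconst hlog, setIntegral_const, integral_const_mul,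
          setIntegral_log_Ioc_zero_one, volume_real_Ioc]
        norm_num
        ring

end Integrand

lemma one_le_log_one_div {x : ℝ} (hx : 0 < x) (hx' : x ≤ 1 / exp 1) : 1 ≤ log (1 / x) := by
  rw [le_log_iff_exp_le (by positivity)]
  rwa [le_div_iff₀ hx, ← le_div_iff₀' (exp_pos 1)]

lemma log_one_add_lt_two_mul_log_one_div {x b : ℝ} (hx : 0 < x) (hx' : x ≤ 1 / exp 1)
    (hb : 0 ≤ b) (hbx : b ≤ x⁻¹) : log (1 + b) < 2 * log (1 / x) := by
  have htwo : 2 < x⁻¹ := by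
    have : exp 1 ≤ x⁻¹ := by rwa [le_inv_comm₀ (exp_pos 1) hx, ← one_div]
    linarith [exp_one_gt_d9]
  calc log (1 + b) < log (x⁻¹ ^ 2) :=
        log_lt_log (by positivity) (by nlinarith)
    _ = 2 * log (1 / x) := by rw [log_pow, one_div]; norm_num

theorem lambda_x_integral_bound_general
    (n : ℕ) (x : ℝ) (hx : 0 < x) (hx' : x ≤ 1 / Real.exp 1) :
    x * ∫ t in Set.Ioc (0:ℝ) 1,
        (t ^ (n - 1) + (((n : ℝ) + 3) * x * Real.log (1 / x))⁻¹) *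
          Real.log (1 + (((n : ℝ) + 3) * x * Real.log (1 / x))⁻¹ * (t ^ (n - 1))⁻¹)
      < 1 := by
  set L := log (1 / x)
  set b := (((n : ℝ) + 3) * x * L)⁻¹
  have hL : 1 ≤ L := one_le_log_one_div hx hx'
  have hb : 0 < b := by positivity
  have hbx : b ≤ x⁻¹ := inv_anti₀ hx (by nlinarith [mul_le_mul_of_nonneg_left hL hx.le])
  have hlog := log_one_add_lt_two_mul_log_one_div hx hx' hb.le hbx
  have hm : ((n - 1 : ℕ) : ℝ) ≤ n := Nat.cast_le.mpr (n.sub_le 1)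
  calc x * ∫ t in Ioc (0 : ℝ) 1, (t ^ (n - 1) + b) * log (1 + b * (t ^ (n - 1))⁻¹)
      ≤ x * (b * ((n - 1 : ℕ) + 1 + log (1 + b))) :=
        mul_le_mul_of_nonneg_left (setIntegral_add_mul_log_one_add_mul_inv_pow_le hb.le) hx.le
    _ < x * (b * ((n + 3) * L)) := by gcongr; nlinarith
    _ = 1 := by simp only [b]; field_simp

/-- For an integer `n ≥ 1` and
`I(λ) = ∫₀¹ (t^{n-1} + λ⁻¹) log(1 + λ⁻¹ t^{-(n-1)}) dt`, for every `0 < x ≤ 1/e`, with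
`λ_x = (n+3) x log(1/x)`, one has `x · I(λ_x) < 1`. -/
theorem lambda_x_integral_bound
    (n : ℕ) (hn : 1 ≤ n) (x : ℝ) (hx : 0 < x) (hx' : x ≤ 1 / Real.exp 1) :
    x * ∫ t in Set.Ioc (0:ℝ) 1,
        (t ^ (n - 1) + (((n : ℝ) + 3) * x * Real.log (1 / x))⁻¹) *
          Real.log (1 + (((n : ℝ) + 3) * x * Real.log (1 / x))⁻¹ * (t ^ (n - 1))⁻¹)
      < 1 :=
  lambda_x_integral_bound_general n x hx hx'
end

section
/- Let a < b be reals, ε > 0, and let f : [a, b] → ℝ be a function that is Lipschitz on every compact subinterval of (a, b), so that f′ exists almost everywhere on (a, b), and suppose M := ∫_a^b e^{ε|f′(t)|} dt < +∞. Then for all a < s₁ < s₂ < b one has |f(s₂) − f(s₁)| ≤ ((s₂ − s₁)/ε) · log(M / (s₂ − s₁)). -/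
/-!
A Lipschitz function is absolutely continuous, so `|f s₂ - f s₁| ≤ ∫_{s₁}^{s₂} |f'|`. Jensen's
inequality for the convex function `x ↦ exp (ε x)` and the normalised Lebesgue measure on
`(s₁, s₂)` gives `exp (ε · ⨍ |f'|) ≤ ⨍ exp (ε |f'|) ≤ M / (s₂ - s₁)`; take logarithms.
-/

open MeasureTheory Set Real

theorem convexOn_exp_const_mul (ε : ℝ) : ConvexOn ℝ univ fun x => exp (ε * x) :=
  convexOn_exp.comp_linearMap (LinearMap.mul ℝ ℝ ε)

section Jensen

variable {α : Type*} [MeasurableSpace α] {μ : Measure α} {t : Set α} {g : α → ℝ} {ε : ℝ}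

theorem mul_setAverage_le_log_setAverage_exp (h0 : μ t ≠ 0) (ht : μ t ≠ ⊤)
    (hg : IntegrableOn g t μ) (hexp : IntegrableOn (fun x => exp (ε * g x)) t μ) :
    ε * ⨍ x in t, g x ∂μ ≤ log (⨍ x in t, exp (ε * g x) ∂μ) := by
  have jensen : exp (ε * ⨍ x in t, g x ∂μ) ≤ ⨍ x in t, exp (ε * g x) ∂μ :=
    (convexOn_exp_const_mul ε).map_set_average_le (by fun_prop) isClosed_univ h0 ht
      (.of_forall fun _ => mem_univ _) hg hexp
  simpa using log_le_log (exp_pos _) jensen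

theorem setIntegral_le_mul_log_setIntegral_exp (hε : 0 < ε) (h0 : μ t ≠ 0) (ht : μ t ≠ ⊤)
    (hg : IntegrableOn g t μ) (hexp : IntegrableOn (fun x => exp (ε * g x)) t μ) :
    ∫ x in t, g x ∂μ ≤ μ.real t / ε * log ((∫ x in t, exp (ε * g x) ∂μ) / μ.real t) := by
  have hμt : 0 < μ.real t := ENNReal.toReal_pos h0 ht
  have key := mul_setAverage_le_log_setAverage_exp h0 ht hg hexp
  rw [setAverage_eq, setAverage_eq, smul_eq_mul, smul_eq_mul, inv_mul_eq_div, inv_mul_eq_div]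
    at key
  rw [div_mul_eq_mul_div, le_div_iff₀ hε]
  calc (∫ x in t, g x ∂μ) * ε = μ.real t * (ε * ((∫ x in t, g x ∂μ) / μ.real t)) := by
        field_simp
    _ ≤ _ := mul_le_mul_of_nonneg_left key hμt.le

end Jensen

theorem AbsolutelyContinuousOnInterval.abs_sub_le_setIntegral_abs_deriv {f : ℝ → ℝ} {a b : ℝ}
    (hab : a ≤ b) (hf : AbsolutelyContinuousOnInterval f a b) :
    |f b - f a| ≤ ∫ t in Ioo a b, |deriv f t| := by
  rw [← hf.integral_deriv_eq_sub, intervalIntegral.integral_of_le hab,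
    integral_Ioc_eq_integral_Ioo]
  exact abs_integral_le_integral_abs

theorem AbsolutelyContinuousOnInterval.integrableOn_deriv_Ioo {f : ℝ → ℝ} {a b : ℝ}
    (hab : a ≤ b) (hf : AbsolutelyContinuousOnInterval f a b) :
    IntegrableOn (deriv f) (Ioo a b) :=
  (intervalIntegrable_iff_integrableOn_Ioo_of_le hab).1 hf.intervalIntegrable_deriv

theorem one_dim_jensen_logLipschitz_estimate_general
    (a b : ℝ) (ε : ℝ) (hε : 0 < ε) (f : ℝ → ℝ)
    (hf : ∀ c d, a < c → c ≤ d → d < b →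
      ∃ K : NNReal, LipschitzOnWith K f (Set.Icc c d))
    (hM : IntegrableOn (fun t => Real.exp (ε * |deriv f t|)) (Set.Ioo a b)) :
    ∀ s₁ s₂, a < s₁ → s₁ < s₂ → s₂ < b →
      |f s₂ - f s₁| ≤ (s₂ - s₁) / ε *
        Real.log ((∫ t in Set.Ioo a b, Real.exp (ε * |deriv f t|)) / (s₂ - s₁)) := by
  intro s₁ s₂ hs₁ h12 hs₂
  obtain ⟨K, hK⟩ := hf s₁ s₂ hs₁ h12.le hs₂
  have hac : AbsolutelyContinuousOnInterval f s₁ s₂ :=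
    LipschitzOnWith.absolutelyContinuousOnInterval (K := K) (by rwa [uIcc_of_le h12.le])
  have hsub : Ioo s₁ s₂ ⊆ Ioo a b := Ioo_subset_Ioo hs₁.le hs₂.le
  have hexp : IntegrableOn (fun t => exp (ε * |deriv f t|)) (Ioo s₁ s₂) := hM.mono_set hsub
  have jensen := setIntegral_le_mul_log_setIntegral_exp hε (by simp [h12]) (by simp)
    (hac.integrableOn_deriv_Ioo h12.le).abs hexp
  rw [volume_real_Ioo_of_le h12.le] at jensen
  have hexp_pos : 0 < ∫ t in Ioo s₁ s₂, exp (ε * |deriv f t|) :=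
    have : NeZero (volume.restrict (Ioo s₁ s₂)) := ⟨by simp [h12]⟩
    integral_exp_pos hexp
  calc |f s₂ - f s₁| ≤ ∫ t in Ioo s₁ s₂, |deriv f t| :=
        hac.abs_sub_le_setIntegral_abs_deriv h12.le
    _ ≤ _ := jensen
    _ ≤ _ := by
        gcongr
        exact .of_forall fun _ => (exp_pos _).le

/-- Let `a < b`, `ε > 0`, and `f : [a,b] → ℝ` be Lipschitz on every compact
subinterval of `(a,b)` with `M := ∫_a^b e^{ε |f'|} < +∞`. Then for all `a < s₁ < s₂ < b`,
`|f(s₂) - f(s₁)| ≤ ((s₂ - s₁)/ε) log(M / (s₂ - s₁))`. -/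
theorem one_dim_jensen_logLipschitz_estimate
    (a b : ℝ) (hab : a < b) (ε : ℝ) (hε : 0 < ε) (f : ℝ → ℝ)
    (hf : ∀ c d, a < c → c ≤ d → d < b →
      ∃ K : NNReal, LipschitzOnWith K f (Set.Icc c d))
    (hM : IntegrableOn (fun t => Real.exp (ε * |deriv f t|)) (Set.Ioo a b)) :
    ∀ s₁ s₂, a < s₁ → s₁ < s₂ → s₂ < b →
      |f s₂ - f s₁| ≤ (s₂ - s₁) / ε *
        Real.log ((∫ t in Set.Ioo a b, Real.exp (ε * |deriv f t|)) / (s₂ - s₁)) :=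
  one_dim_jensen_logLipschitz_estimate_general a b ε hε f hf hM
end

section
/- Let n ≥ 2 and let P ⊂ ℝⁿ be a compact convex polytope with nonempty interior. Then there exists a constant c ∈ (0, 1) with the following property: for every pair of distinct points s₁, s₂ ∈ P there exists a compact set A contained in int P and contained in the hyperplane passing through the midpoint (s₁ + s₂)/2 and perpendicular to s₂ − s₁, such that c · ‖s₁ − s₂‖^{n−1} ≤ V_{n−1}(A) ≤ 1 and ‖s₁ − σ‖ ≤ ‖s₁ − s₂‖/(2c) for all σ ∈ A, where V_{n−1} denotes (n−1)-dimensional Hausdorff measure. -/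
open MeasureTheory Filter Topology RealInnerProductSpace

/-!
Fix a ball `B(x₀, r) ⊆ int P` and `R` with `P ⊆ B̄(x₀, R)`. For `s ≠ t` in `P` with
`d = ‖s - t‖`, the homothety of ratio `μ = d / (4R)` centred at a point `w ∈ [s, t]` maps
`B(x₀, r)` to a ball of radius `μ r` in `int P`; as `w` runs along `[s, t]` the centre
`(1 - μ) w + μ x₀` crosses the perpendicular bisector, and it stays within `2d` of `s`.
The set `A` is the flat `(n-1)`-disc of radius `ε d` (for a small `ε` depending only on `P`)
around that centre, orthogonal to `t - s`. Since `μH[n-1]` is an additive Haar measure on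
`ℝⁿ⁻¹`, the measure of `A` is `(ε d)ⁿ⁻¹` times that of the unit `(n-1)`-ball.
-/

open Metric Module AffineSubspace

theorem dist_le_two_mul_of_mem_closedBall {X : Type*} [PseudoMetricSpace X] {x y c : X}
    {R : ℝ} (hx : x ∈ closedBall c R) (hy : y ∈ closedBall c R) : dist x y ≤ 2 * R :=
  (dist_triangle_right x y c).trans (by rw [two_mul]; exact add_le_add hx hy)

variable {E : Type*} [NormedAddCommGroup E] [InnerProductSpace ℝ E]

theorem Convex.ball_combo_subset_interior {P : Set E} (hP : Convex ℝ P) {w c : E} {r μ : ℝ}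
    (hw : w ∈ P) (hc : ball c r ⊆ interior P) (hμ0 : 0 < μ) (hμ1 : μ ≤ 1) :
    ball ((1 - μ) • w + μ • c) (μ * r) ⊆ interior P := by
  intro y hy
  set b := c + μ⁻¹ • (y - ((1 - μ) • w + μ • c))
  have hb : b ∈ ball c r := by
    rw [mem_ball, dist_eq_norm, add_sub_cancel_left, norm_smul,
      Real.norm_of_nonneg (inv_nonneg.2 hμ0.le), inv_mul_lt_iff₀ hμ0, ← dist_eq_norm]
    exact hy
  have hy : y = (1 - μ) • w + μ • b := by
    simp only [b, smul_add, smul_inv_smul₀ hμ0.ne']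
    abel
  rw [hy]
  exact hP.combo_self_interior_mem_interior hw (hc hb) (by linarith) hμ0 (by ring)

theorem exists_combo_mem_perpBisector (s t x : E) {μ : ℝ}
    (hμ : |μ * ⟪x - midpoint ℝ s t, t - s⟫| ≤ (1 - μ) * ‖s - t‖ ^ 2 / 2) :
    ∃ θ ∈ Set.Icc (0 : ℝ) 1, (1 - μ) • ((1 - θ) • s + θ • t) + μ • x ∈ perpBisector s t := by
  set m := midpoint ℝ s t
  have hg : ∀ θ : ℝ, ⟪(1 - μ) • ((1 - θ) • s + θ • t) + μ • x - m, t - s⟫ =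
      (1 - μ) * (θ - 1 / 2) * ‖s - t‖ ^ 2 + μ * ⟪x - m, t - s⟫ := by
    intro θ
    have : (1 - μ) • ((1 - θ) • s + θ • t) + μ • x - m =
        ((1 - μ) * (θ - 1 / 2)) • (t - s) + μ • (x - m) := by
      simp only [m, midpoint_eq_smul_add, invOf_eq_inv]
      module
    rw [this, inner_add_left, real_inner_smul_left, real_inner_smul_left,
      real_inner_self_eq_norm_sq, norm_sub_rev]
  simp only [mem_perpBisector_iff_inner_eq_zero, vsub_eq_sub]
  refine intermediate_value_Icc zero_le_one (by fun_prop) ?_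
  have := abs_le.1 hμ
  constructor <;> rw [hg] <;> linarith

theorem Convex.exists_mem_perpBisector_ball_subset_interior {P : Set E} (hP : Convex ℝ P)
    {x₀ : E} {r R : ℝ} (hball : ball x₀ r ⊆ interior P) (hPR : P ⊆ closedBall x₀ R)
    {s t : E} (hs : s ∈ P) (ht : t ∈ P) (hst : s ≠ t) :
    ∃ q ∈ perpBisector s t, ‖s - q‖ ≤ 2 * ‖s - t‖ ∧
      ball q (r * ‖s - t‖ / (4 * R)) ⊆ interior P := by
  set d := ‖s - t‖
  have hd : 0 < d := norm_pos_iff.2 (sub_ne_zero.2 hst)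
  have hdR : d ≤ 2 * R :=
    (dist_eq_norm s t).symm.le.trans (dist_le_two_mul_of_mem_closedBall (hPR hs) (hPR ht))
  have hR : 0 < R := by linarith
  set μ := d / (4 * R)
  have hμ0 : 0 < μ := by positivity
  have hμ : μ ≤ 1 / 2 := by rw [div_le_iff₀ (by positivity)]; linarith
  have hμR : μ * R = d / 4 := by simp only [μ]; field_simp
  have hcross : |μ * ⟪x₀ - midpoint ℝ s t, t - s⟫| ≤ (1 - μ) * d ^ 2 / 2 := by
    have hm : ‖x₀ - midpoint ℝ s t‖ ≤ R := by
      rw [norm_sub_rev]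
      exact mem_closedBall_iff_norm.1 (hPR (hP.segment_subset hs ht (midpoint_mem_segment s t)))
    calc |μ * ⟪x₀ - midpoint ℝ s t, t - s⟫| ≤ μ * (‖x₀ - midpoint ℝ s t‖ * ‖t - s‖) := by
          rw [abs_mul, abs_of_pos hμ0]; exact mul_le_mul_of_nonneg_left
            (abs_real_inner_le_norm _ _) hμ0.le
      _ ≤ μ * (R * d) := by rw [norm_sub_rev t s]; gcongr
      _ ≤ (1 - μ) * d ^ 2 / 2 := by nlinarith
  obtain ⟨θ, ⟨hθ0, hθ1⟩, hθ⟩ := exists_combo_mem_perpBisector s t x₀ hcross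
  refine ⟨_, hθ, ?_, ?_⟩
  · have hsx₀ : ‖s - x₀‖ ≤ R := mem_closedBall_iff_norm.1 (hPR hs)
    calc ‖s - ((1 - μ) • ((1 - θ) • s + θ • t) + μ • x₀)‖
        = ‖(1 - μ) • (θ • (s - t)) + μ • (s - x₀)‖ := by congr 1; module
      _ ≤ (1 - μ) * (θ * d) + μ * R := by
          refine (norm_add_le _ _).trans (add_le_add ?_ ?_) <;>
            simp only [norm_smul, Real.norm_of_nonneg hθ0, Real.norm_of_nonneg hμ0.le,
              Real.norm_of_nonneg (by linarith : 0 ≤ 1 - μ)] <;> gcongr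
      _ ≤ 2 * d := by
          nlinarith [mul_le_mul_of_nonneg_left hθ1 hd.le, mul_nonneg hμ0.le (mul_nonneg hθ0 hd.le)]
  · convert hP.ball_combo_subset_interior (hP hs ht (sub_nonneg.2 hθ1) hθ0 (sub_add_cancel 1 θ))
      hball hμ0 (by linarith) using 2
    simp only [μ]
    ring

theorem exists_linearIsometry_inner_eq_zero {k : ℕ} (hE : finrank ℝ E = k + 1) {v : E}
    (hv : v ≠ 0) : ∃ L : EuclideanSpace ℝ (Fin k) →ₗᵢ[ℝ] E, ∀ x, ⟪L x, v⟫ = 0 := by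
  have : Fact (finrank ℝ E = k + 1) := ⟨hE⟩
  set b := OrthonormalBasis.fromOrthogonalSpanSingleton (𝕜 := ℝ) k hv
  refine ⟨(ℝ ∙ v)ᗮ.subtypeₗᵢ.comp b.repr.symm.toLinearIsometry, fun x => ?_⟩
  rw [real_inner_comm]
  exact (b.repr.symm x).2 v (Submodule.mem_span_singleton_self v)

variable [MeasurableSpace E] [BorelSpace E]

theorem exists_isCompact_orthogonal_disc {k : ℕ} (hE : finrank ℝ E = k + 1) (q : E) {v : E}
    (hv : v ≠ 0) {ρ : ℝ} (hρ : 0 ≤ ρ) :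
    ∃ A : Set E, IsCompact A ∧ A ⊆ closedBall q ρ ∧ (∀ σ ∈ A, ⟪σ - q, v⟫ = 0) ∧
      μH[k] A = ENNReal.ofReal (ρ ^ k) * μH[k] (closedBall (0 : EuclideanSpace ℝ (Fin k)) 1) := by
  obtain ⟨L, hL⟩ := exists_linearIsometry_inner_eq_zero hE hv
  have hφ : Isometry (q + L ·) := (isometry_add_left q).comp L.isometry
  refine ⟨(q + L ·) '' closedBall 0 ρ, (isCompact_closedBall 0 ρ).image hφ.continuous, ?_, ?_, ?_⟩
  · rintro _ ⟨x, hx, rfl⟩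
    simpa [dist_eq_norm] using hx
  · rintro _ ⟨x, -, rfl⟩
    simpa using hL x
  · rw [hφ.hausdorffMeasure_image (Or.inl (Nat.cast_nonneg k)),
      Measure.addHaar_closedBall' _ _ hρ, finrank_euclideanSpace_fin]

theorem Convex.exists_perpBisector_disc {k : ℕ} (hE : finrank ℝ E = k + 1) {P : Set E}
    (hP : Convex ℝ P) {x₀ : E} {r R : ℝ} (hball : ball x₀ r ⊆ interior P)
    (hPR : P ⊆ closedBall x₀ R) {s t : E} (hs : s ∈ P) (ht : t ∈ P) (hst : s ≠ t) {ε : ℝ}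
    (hε0 : 0 ≤ ε) (hεr : ε < r / (4 * R)) :
    ∃ A : Set E, IsCompact A ∧ A ⊆ interior P ∧ A ⊆ perpBisector s t ∧
      μH[k] A = ENNReal.ofReal ((ε * ‖s - t‖) ^ k) *
        μH[k] (closedBall (0 : EuclideanSpace ℝ (Fin k)) 1) ∧
      ∀ σ ∈ A, ‖s - σ‖ ≤ (2 + ε) * ‖s - t‖ := by
  have hd : 0 < ‖s - t‖ := norm_pos_iff.2 (sub_ne_zero.2 hst)
  obtain ⟨q, hqm, hsq, hq⟩ :=
    hP.exists_mem_perpBisector_ball_subset_interior hball hPR hs ht hst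
  obtain ⟨A, hA, hAq, hAv, hAμ⟩ := exists_isCompact_orthogonal_disc hE q
    (sub_ne_zero.2 hst.symm) (by positivity : 0 ≤ ε * ‖s - t‖)
  have hεd : ε * ‖s - t‖ < r * ‖s - t‖ / (4 * R) := by
    rw [mul_div_right_comm]; exact mul_lt_mul_of_pos_right hεr hd
  refine ⟨A, hA, hAq.trans ((closedBall_subset_ball hεd).trans hq), fun σ hσ => ?_, hAμ,
    fun σ hσ => ?_⟩
  · rw [mem_perpBisector_iff_inner_eq_zero, vsub_eq_sub, vsub_eq_sub] at hqm
    rw [SetLike.mem_coe, mem_perpBisector_iff_inner_eq_zero, vsub_eq_sub, vsub_eq_sub,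
      ← sub_add_sub_cancel σ q, inner_add_left, hAv σ hσ, hqm, add_zero]
  · calc ‖s - σ‖ ≤ ‖s - q‖ + ‖q - σ‖ := norm_sub_le_norm_sub_add_norm_sub s q σ
      _ ≤ 2 * ‖s - t‖ + ε * ‖s - t‖ := by
          rw [norm_sub_rev q σ]
          exact add_le_add hsq (mem_closedBall_iff_norm.1 (hAq hσ))
      _ = (2 + ε) * ‖s - t‖ := by ring

theorem Convex.exists_perpBisector_disc_estimate {k : ℕ} (hk : k ≠ 0)
    (hE : finrank ℝ E = k + 1) {P : Set E} (hP : Convex ℝ P) {x₀ : E} {r R : ℝ} (hr : 0 < r)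
    (hR : 0 < R) (hball : ball x₀ r ⊆ interior P) (hPR : P ⊆ closedBall x₀ R) :
    ∃ c ∈ Set.Ioo (0 : ℝ) 1, ∀ s ∈ P, ∀ t ∈ P, s ≠ t →
      ∃ A : Set E, IsCompact A ∧ A ⊆ interior P ∧ A ⊆ perpBisector s t ∧
        ENNReal.ofReal (c * ‖s - t‖ ^ k) ≤ μH[k] A ∧ μH[k] A ≤ 1 ∧
        ∀ σ ∈ A, ‖s - σ‖ ≤ ‖s - t‖ / (2 * c) := by
  set M := (μH[k] (closedBall (0 : EuclideanSpace ℝ (Fin k)) 1)).toReal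
  have hM : ENNReal.ofReal M = μH[k] (closedBall (0 : EuclideanSpace ℝ (Fin k)) 1) :=
    ENNReal.ofReal_toReal measure_closedBall_lt_top.ne
  have hM0 : 0 < M :=
    ENNReal.toReal_pos (measure_closedBall_pos _ _ one_pos).ne' measure_closedBall_lt_top.ne
  obtain ⟨ε, ⟨hεr, hε1, hεM⟩, hε0⟩ : ∃ ε, (ε < r / (4 * R) ∧ ε ≤ 1 ∧
      (ε * (2 * R)) ^ k * M ≤ 1) ∧ 0 < ε := by
    have hcont : Tendsto (fun ε : ℝ => (ε * (2 * R)) ^ k * M) (𝓝 0) (𝓝 0) := by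
      simpa [hk] using
        (by fun_prop : Continuous fun ε : ℝ => (ε * (2 * R)) ^ k * M).tendsto 0
    have hsmall : ∀ᶠ ε in 𝓝 (0 : ℝ), ε < r / (4 * R) ∧ ε ≤ 1 ∧ (ε * (2 * R)) ^ k * M ≤ 1 :=
      (gt_mem_nhds (by positivity)).and
        ((ge_mem_nhds one_pos).and (hcont.eventually (ge_mem_nhds one_pos)))
    exact ((hsmall.filter_mono nhdsWithin_le_nhds).and self_mem_nhdsWithin).exists
      (f := 𝓝[>] (0 : ℝ))
  refine ⟨min (ε ^ k * M) 6⁻¹, ⟨by positivity, by norm_num⟩, fun s hs t ht hst => ?_⟩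
  obtain ⟨A, hA, hAP, hAm, hAμ, hAs⟩ :=
    hP.exists_perpBisector_disc hE hball hPR hs ht hst hε0.le hεr
  have hd : 0 < ‖s - t‖ := norm_pos_iff.2 (sub_ne_zero.2 hst)
  have hdR : ‖s - t‖ ≤ 2 * R :=
    (dist_eq_norm s t).symm.le.trans (dist_le_two_mul_of_mem_closedBall (hPR hs) (hPR ht))
  refine ⟨A, hA, hAP, hAm, ?_, ?_, fun σ hσ => ?_⟩
  · rw [hAμ, ← hM, ← ENNReal.ofReal_mul (by positivity)]
    refine ENNReal.ofReal_le_ofReal ?_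
    calc min (ε ^ k * M) 6⁻¹ * ‖s - t‖ ^ k ≤ ε ^ k * M * ‖s - t‖ ^ k := by
          gcongr; exact min_le_left _ _
      _ = (ε * ‖s - t‖) ^ k * M := by ring
  · rw [hAμ, ← hM, ← ENNReal.ofReal_mul (by positivity), ENNReal.ofReal_le_one]
    calc (ε * ‖s - t‖) ^ k * M ≤ (ε * (2 * R)) ^ k * M := by gcongr
      _ ≤ 1 := hεM
  · rw [le_div_iff₀ (by positivity)]
    calc ‖s - σ‖ * (2 * min (ε ^ k * M) 6⁻¹) ≤ ((2 + ε) * ‖s - t‖) * (2 * 6⁻¹) := by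
          gcongr
          · exact hAs σ hσ
          · exact min_le_right _ _
      _ ≤ ‖s - t‖ := by nlinarith

/-- Let `n ≥ 2` and `P ⊂ ℝⁿ` be a compact convex polytope with nonempty
interior. There is `c ∈ (0,1)` such that for all distinct `s₁, s₂ ∈ P` there is a compact
set `A ⊆ int P` contained in the perpendicular bisector hyperplane of `[s₁, s₂]` with
`c ‖s₁ - s₂‖^{n-1} ≤ V_{n-1}(A) ≤ 1` and `‖s₁ - σ‖ ≤ ‖s₁ - s₂‖/(2c)` for all `σ ∈ A`,
where `V_{n-1}` is the `(n-1)`-dimensional Hausdorff measure. -/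
theorem polytope_bisector_slab_estimate
    (n : ℕ) (hn : 2 ≤ n) (P : Set (EuclideanSpace ℝ (Fin n)))
    (T : Finset (EuclideanSpace ℝ (Fin n)))
    (hP : P = convexHull ℝ (T : Set (EuclideanSpace ℝ (Fin n))))
    (hPint : (interior P).Nonempty) :
    ∃ c ∈ Set.Ioo (0:ℝ) 1, ∀ s₁ ∈ P, ∀ s₂ ∈ P, s₁ ≠ s₂ →
      ∃ A : Set (EuclideanSpace ℝ (Fin n)), IsCompact A ∧ A ⊆ interior P ∧
        (∀ σ ∈ A, ⟪σ - (2:ℝ)⁻¹ • (s₁ + s₂), s₂ - s₁⟫ = 0) ∧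
        ENNReal.ofReal (c * ‖s₁ - s₂‖ ^ (n - 1)) ≤ μH[(n:ℝ) - 1] A ∧
        μH[(n:ℝ) - 1] A ≤ 1 ∧
        ∀ σ ∈ A, ‖s₁ - σ‖ ≤ ‖s₁ - s₂‖ / (2 * c) := by
  obtain ⟨x₀, hx₀⟩ := hPint
  obtain ⟨r, hr, hball⟩ := isOpen_iff.1 isOpen_interior x₀ hx₀
  obtain ⟨R, hR, hPR⟩ := (hP ▸ isBounded_convexHull.2 T.finite_toSet.isBounded :
    Bornology.IsBounded P).subset_closedBall_lt 0 x₀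
  have hdim : ((n - 1 : ℕ) : ℝ) = (n : ℝ) - 1 := by rw [Nat.cast_sub (by omega), Nat.cast_one]
  obtain ⟨c, hc, h⟩ := (hP ▸ convex_convexHull ℝ _ : Convex ℝ P).exists_perpBisector_disc_estimate
    (k := n - 1) (by omega) (by rw [finrank_euclideanSpace_fin]; omega) hr hR hball hPR
  refine ⟨c, hc, fun s₁ hs₁ s₂ hs₂ hne => ?_⟩
  obtain ⟨A, hA, hAP, hAm, hAμ⟩ := h s₁ hs₁ s₂ hs₂ hne
  refine ⟨A, hA, hAP, fun σ hσ => ?_, by simpa only [hdim] using hAμ⟩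
  simpa [mem_perpBisector_iff_inner_eq_zero, midpoint_eq_smul_add] using hAm hσ
end

section
/- Let P ⊂ ℝⁿ be a compact convex set with nonempty interior and let G : P → ℝ be a convex function. Suppose there is a constant C > 0 with C ≥ diam(P) such that |G(s) − G(s′)| ≤ C · ‖s − s′‖ · log(C / ‖s − s′‖) for all distinct s, s′ ∈ P. Then at every point s ∈ int P at which G is differentiable one has ‖∇G(s)‖ ≤ C · log(C / dist(s, ∂P)). -/
/-!
Let `g = ∇G(s)` and `r = dist(s, ∂P)`. The closed ball of radius `r` about `s` lies in `P`, so
the point `s' = s + r g/‖g‖` does, and the tangent-line inequality of the convex function `G`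
gives `r ‖g‖ = ⟪g, s' - s⟫ ≤ G s' - G s ≤ C r log (C / r)`; divide by `r`.
-/

open Metric

theorem ConvexOn.apply_sub_le_sub_of_hasFDerivAt {E : Type*} [NormedAddCommGroup E]
    [NormedSpace ℝ E] {P : Set E} {G : E → ℝ} {G' : E →L[ℝ] ℝ} {x y : E}
    (hG : ConvexOn ℝ P G) (hx : x ∈ P) (hy : y ∈ P) (hG' : HasFDerivAt G G' x) :
    G' (y - x) ≤ G y - G x := by
  let ℓ : ℝ →ᵃ[ℝ] E := AffineMap.lineMap x y
  have hline : ConvexOn ℝ (ℓ ⁻¹' P) (G ∘ ℓ) := hG.comp_affineMap ℓ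
  have hderiv : HasDerivAt (G ∘ ℓ) (G' (y - x)) 0 := by
    refine HasFDerivAt.comp_hasDerivAt (0 : ℝ) ?_ AffineMap.hasDerivAt_lineMap
    simpa [ℓ] using hG'
  simpa [ℓ, slope] using hline.le_slope_of_hasDerivAt (x := 0) (y := 1) (by simpa [ℓ])
    (by simpa [ℓ]) zero_lt_one hderiv

theorem ConvexOn.mul_norm_le_of_hasGradientAt {E : Type*} [NormedAddCommGroup E]
    [InnerProductSpace ℝ E] [CompleteSpace E] {P : Set E} {G : E → ℝ} {g s : E} {r M : ℝ}
    (hG : ConvexOn ℝ P G) (hg : HasGradientAt G g s) (hg0 : g ≠ 0) (hr : 0 ≤ r)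
    (hball : closedBall s r ⊆ P) (hM : ∀ s' ∈ sphere s r, G s' - G s ≤ M) :
    r * ‖g‖ ≤ M := by
  have hgpos : 0 < ‖g‖ := norm_pos_iff.2 hg0
  set s' := s + (r / ‖g‖) • g
  have hs' : s' ∈ sphere s r := by
    simp [s', norm_smul, abs_of_nonneg hr, hgpos.ne']
  have hinner : inner ℝ g (s' - s) = r * ‖g‖ := by
    simp only [s', add_sub_cancel_left, real_inner_smul_right, real_inner_self_eq_norm_sq]
    field_simp
  calc r * ‖g‖ = inner ℝ g (s' - s) := hinner.symm
    _ ≤ G s' - G s := by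
      simpa using hG.apply_sub_le_sub_of_hasFDerivAt (hball (mem_closedBall_self hr))
        (hball (sphere_subset_closedBall hs')) hg.hasFDerivAt
    _ ≤ M := hM s' hs'

theorem closedBall_infDist_frontier_subset {E : Type*} [NormedAddCommGroup E] [NormedSpace ℝ E]
    [FiniteDimensional ℝ E] {P : Set E} {s : E} (hP : IsClosed P) (hs : s ∈ P) :
    closedBall s (infDist s (frontier P)) ⊆ P := by
  rcases eq_or_ne P Set.univ with rfl | hPne
  · exact Set.subset_univ _
  obtain ⟨y, hy, hdist⟩ := exists_mem_frontier_infDist_compl_eq_dist hs hPne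
  calc closedBall s (infDist s (frontier P))
      ⊆ closedBall s (infDist s Pᶜ) :=
        closedBall_subset_closedBall (hdist ▸ infDist_le_dist_of_mem hy)
    _ ⊆ closure P := closedBall_infDist_compl_subset_closure hs
    _ = P := hP.closure_eq

theorem infDist_frontier_le_diam {E : Type*} [PseudoMetricSpace E] {P : Set E} {s : E}
    (hP : Bornology.IsBounded P) (hs : s ∈ P) : infDist s (frontier P) ≤ diam P := by
  rcases (frontier P).eq_empty_or_nonempty with hfr | ⟨y, hy⟩
  · simpa [hfr] using diam_nonneg
  calc infDist s (frontier P) ≤ dist s y := infDist_le_dist_of_mem hy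
    _ ≤ diam (closure P) :=
      dist_le_diam_of_mem hP.closure (subset_closure hs) (frontier_subset_closure hy)
    _ = diam P := diam_closure P

-- For `r = 0` this holds through the junk values `C / 0 = 0` and `log 0 = 0`.
theorem mul_log_div_nonneg_of_le {r C : ℝ} (hr : 0 ≤ r) (hrC : r ≤ C) :
    0 ≤ C * Real.log (C / r) := by
  rcases hr.eq_or_lt with rfl | hr
  · simp
  · exact mul_nonneg (hr.le.trans hrC) (Real.log_nonneg ((one_le_div hr).2 hrC))

theorem logLipschitz_implies_gradient_bound_general
    (n : ℕ) (P : Set (EuclideanSpace ℝ (Fin n)))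
    (hPc : IsCompact P)
    (G : EuclideanSpace ℝ (Fin n) → ℝ) (hconv : ConvexOn ℝ P G)
    (C : ℝ) (hCdiam : Metric.diam P ≤ C)
    (hLL : ∀ s ∈ P, ∀ s' ∈ P, s ≠ s' →
      |G s - G s'| ≤ C * ‖s - s'‖ * Real.log (C / ‖s - s'‖)) :
    ∀ s ∈ interior P, DifferentiableAt ℝ G s →
      ‖gradient G s‖ ≤ C * Real.log (C / Metric.infDist s (frontier P)) := by
  intro s hs hdiff
  have hsP : s ∈ P := interior_subset hs
  set r := infDist s (frontier P)
  rcases eq_or_ne (gradient G s) 0 with hg0 | hg0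
  · rw [hg0, norm_zero]
    exact mul_log_div_nonneg_of_le infDist_nonneg
      ((infDist_frontier_le_diam hPc.isBounded hsP).trans hCdiam)
  have : Nontrivial (EuclideanSpace ℝ (Fin n)) := ⟨⟨_, _, hg0⟩⟩
  obtain ⟨y, hy, -⟩ := hPc.exists_mem_frontier_infDist_compl_eq_dist hsP
  have hr : 0 < r := (isClosed_frontier.notMem_iff_infDist_pos ⟨y, hy⟩).1 fun h => h.2 hs
  have hball := closedBall_infDist_frontier_subset hPc.isClosed hsP
  have hbound : r * ‖gradient G s‖ ≤ r * (C * Real.log (C / r)) := by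
    refine hconv.mul_norm_le_of_hasGradientAt hdiff.hasGradientAt hg0 hr.le hball ?_
    intro s' hs'
    have hdist : ‖s - s'‖ = r := by rw [← dist_eq_norm, dist_comm]; exact hs'
    have hLLs := hLL s hsP s' (hball (sphere_subset_closedBall hs'))
      (ne_of_mem_sphere hs' hr.ne').symm
    rw [hdist, abs_sub_comm] at hLLs
    linarith [le_abs_self (G s' - G s)]
  exact le_of_mul_le_mul_left hbound hr

/-- Let `P ⊂ ℝⁿ` be compact convex with nonempty interior and `G : P → ℝ`
convex. If `C > 0`, `C ≥ diam P`, and `|G(s) - G(s')| ≤ C ‖s - s'‖ log(C/‖s - s'‖)` for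
all distinct `s, s' ∈ P`, then at every interior point of differentiability,
`‖∇G(s)‖ ≤ C log(C / dist(s, ∂P))`. -/
theorem logLipschitz_implies_gradient_bound
    (n : ℕ) (P : Set (EuclideanSpace ℝ (Fin n)))
    (hPc : IsCompact P) (hPconv : Convex ℝ P) (hPint : (interior P).Nonempty)
    (G : EuclideanSpace ℝ (Fin n) → ℝ) (hconv : ConvexOn ℝ P G)
    (C : ℝ) (hC : 0 < C) (hCdiam : Metric.diam P ≤ C)
    (hLL : ∀ s ∈ P, ∀ s' ∈ P, s ≠ s' →
      |G s - G s'| ≤ C * ‖s - s'‖ * Real.log (C / ‖s - s'‖)) :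
    ∀ s ∈ interior P, DifferentiableAt ℝ G s →
      ‖gradient G s‖ ≤ C * Real.log (C / Metric.infDist s (frontier P)) :=
  logLipschitz_implies_gradient_bound_general n P hPc G hconv C hCdiam hLL
end
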